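/- arXiv:1602.08502 — 10 statements merged into one kernel-verified Lean document; each statement's English description precedes it below -/
import Mathlib

section
/- The monoid M defined by the presentation ⟨a, b | ab^n a = aba for all n ≥ 2⟩ is not finitely presented; that is, the congruence on the free monoid {a,b}* generated by the relation set {(ab^n a, aba) : n ≥ 2} is not generated by any finite subset of pairs of words. -/
open Relation

/-- Alphabet for the monoid `M`. -/
inductive AB : Type | a | b

/-- Alphabet for the monoid `N`. -/
inductive CD : Type | c | d

abbrev WM := FreeMonoid AB
abbrev WN := FreeMonoid CD

def a : WM := FreeMonoid.of AB.a
def b : WM := FreeMonoid.of AB.b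
def c : WN := FreeMonoid.of CD.c
def d : WN := FreeMonoid.of CD.d

/-- The defining relation set of `M`: `a b^n a = a b a` for `n ≥ 2`. -/
def rM : WM → WM → Prop := fun x y => ∃ n, 2 ≤ n ∧ x = a * b ^ n * a ∧ y = a * b * a

/-- The defining relation set of `N`. -/
def rN : WN → WN → Prop := fun x y =>
  (x = c * d ^ 2 * c ∨ x = c * d ^ 4 ∨ x = c * d ^ 3 * c ^ 2 ∨ x = c * d ^ 3 * (c * d * c)) ∧
    y = c * d * c

/-- Single-step rewriting relation of a rewriting system `R`. -/
def Step {α : Type} (R : FreeMonoid α → FreeMonoid α → Prop) (x y : FreeMonoid α) : Prop :=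
  ∃ u v p q, R u v ∧ x = p * u * q ∧ y = p * v * q

/-- A word is irreducible if no single-step rewrite applies to it. -/
def Irred {α : Type} (R : FreeMonoid α → FreeMonoid α → Prop) (w : FreeMonoid α) : Prop :=
  ∀ v, ¬ Step R w v

/-- Words `a^{i₀} b a^{i₁} b ⋯ b a^{i_k}` with `k ≥ 0`, all `i_j ≥ 1`. -/
def UM : Set WM :=
  {w | ∃ l : List ℕ, l ≠ [] ∧ (∀ i ∈ l, 1 ≤ i) ∧ w = ((l.map (a ^ ·)).intersperse b).prod}

/-- Words `c^{i₀} d c^{i₁} d ⋯ d c^{i_k}` with `k ≥ 0`, all `i_j ≥ 1`. -/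
def UN : Set WN :=
  {w | ∃ l : List ℕ, l ≠ [] ∧ (∀ i ∈ l, 1 ≤ i) ∧ w = ((l.map (c ^ ·)).intersperse d).prod}

/-- Normal forms for `M`. -/
def NM : Set WM :=
  {w | (∃ s : ℕ, w = b ^ s) ∨ (∃ s : ℕ, ∃ u ∈ UM, w = b ^ s * u) ∨
    (∃ s t : ℕ, ∃ u ∈ UM, 0 < t ∧ w = b ^ s * u * b ^ t)}

/-- Normal forms for `N`. -/
def NN : Set WN :=
  {w | (∃ p : ℕ, w = d ^ p) ∨ (∃ p : ℕ, ∃ v ∈ UN, w = d ^ p * v) ∨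
    (∃ p q r : ℕ, ∃ v ∈ UN, r ≤ 3 ∧ 0 < q + r ∧ w = d ^ p * v * (d ^ 3 * c) ^ q * d ^ r)}

/-- The substitution `a ↦ c`, `b ↦ d`. -/
def bar : WM →* WN := FreeMonoid.map fun x => match x with | AB.a => CD.c | AB.b => CD.d


/-!
A finite set of defining relations for `M` could be derived from finitely many of the relations
`a b^n a = a b a`, hence from those with `n ≤ N` for a single bound `N`. These relations never
change whether some block of `b`s enclosed by two `a`s has length exactly `N + 2`, which is
detected by a monoid homomorphism into the transformations of a small automaton; that
homomorphism separates `a b^(N+2) a` from `a b a`.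
-/

namespace Con

variable {M ι : Type*} [Mul M] [SemilatticeSup ι] [Nonempty ι]
  {R : M → M → Prop} {r : ι → M → M → Prop}

theorem exists_conGen_of_monotone (hr : Monotone r) (hR : ∀ x y, R x y → ∃ i, r i x y)
    {x y : M} (h : conGen R x y) : ∃ i, conGen (r i) x y := by
  have mono {i j : ι} (hij : i ≤ j) : conGen (r i) ≤ conGen (r j) := conGen_mono (hr hij)
  induction h with
  | of x y hxy =>
    obtain ⟨i, hi⟩ := hR x y hxy
    exact ⟨i, ConGen.Rel.of x y hi⟩
  | refl x => exact ⟨Classical.arbitrary ι, (conGen _).refl x⟩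
  | symm _ ih =>
    obtain ⟨i, hi⟩ := ih
    exact ⟨i, (conGen _).symm hi⟩
  | trans _ _ ih₁ ih₂ =>
    obtain ⟨i, hi⟩ := ih₁
    obtain ⟨j, hj⟩ := ih₂
    exact ⟨i ⊔ j, (conGen _).trans (mono le_sup_left hi) (mono le_sup_right hj)⟩
  | mul _ _ ih₁ ih₂ =>
    obtain ⟨i, hi⟩ := ih₁
    obtain ⟨j, hj⟩ := ih₂
    exact ⟨i ⊔ j, (conGen _).mul (mono le_sup_left hi) (mono le_sup_right hj)⟩

theorem exists_conGen_le_of_finite (hr : Monotone r) (hR : ∀ x y, R x y → ∃ i, r i x y)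
    {S : Set (M × M)} (hS : S.Finite) (h : conGen (fun x y => (x, y) ∈ S) ≤ conGen R) :
    ∃ i, conGen (fun x y => (x, y) ∈ S) ≤ conGen (r i) := by
  have hbound (p : S) : ∃ i, conGen (r i) p.1.1 p.1.2 :=
    exists_conGen_of_monotone hr hR (h (ConGen.Rel.of _ _ p.2))
  choose idx hidx using hbound
  have : Finite S := hS.to_subtype
  obtain ⟨i, hi⟩ := Finite.bddAbove_range idx
  refine ⟨i, conGen_le.mpr fun x y hxy => ?_⟩
  exact conGen_mono (hr (hi ⟨⟨(x, y), hxy⟩, rfl⟩)) (hidx ⟨(x, y), hxy⟩)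

end Con

def rMUpTo (N : ℕ) : WM → WM → Prop :=
  fun x y => ∃ n, 2 ≤ n ∧ n ≤ N ∧ x = a * b ^ n * a ∧ y = a * b * a

lemma rMUpTo_monotone : Monotone rMUpTo :=
  fun _ _ hNM _ _ ⟨n, h2, hn, hx, hy⟩ => ⟨n, h2, hn.trans hNM, hx, hy⟩

lemma exists_rMUpTo_of_rM {x y : WM} (h : rM x y) : ∃ N, rMUpTo N x y :=
  let ⟨n, h2, hx, hy⟩ := h
  ⟨n, n, h2, le_rfl, hx, hy⟩

/-- The automaton reads a word from right to left; after the first `a` it counts the `b`s up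
to the next `a`, and records whether that count was the target length. -/
inductive BlockState : Type
  | start
  | count (k : ℕ)
  | hit
  | miss

namespace BlockState

def readA (m : ℕ) : BlockState → BlockState
  | start => count 0
  | count k => if k = m then hit else miss
  | s => s

def readB : BlockState → BlockState
  | count k => count (k + 1)
  | s => s

def run (m : ℕ) : WM →* Function.End BlockState :=
  FreeMonoid.lift fun
    | .a => readA m
    | .b => readB

lemma run_mul_apply (m : ℕ) (u v : WM) (s : BlockState) :
    run m (u * v) s = run m u (run m v s) := by
  rw [map_mul]
  rfl

lemma run_a (m : ℕ) : run m a = readA m := FreeMonoid.lift_eval_of _ _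

lemma run_b (m : ℕ) : run m b = readB := FreeMonoid.lift_eval_of _ _

lemma run_b_pow_count (m n k : ℕ) : run m (b ^ n) (count k) = count (k + n) := by
  induction n with
  | zero => rfl
  | succ n ih =>
    rw [pow_succ', run_mul_apply, ih, run_b]
    rfl

lemma run_b_pow_of_ne_count (m n : ℕ) {s : BlockState} (hs : ∀ k, s ≠ count k) :
    run m (b ^ n) s = s := by
  induction n with
  | zero => rfl
  | succ n ih =>
    rw [pow_succ', run_mul_apply, ih, run_b]
    cases s with
    | count k => exact absurd rfl (hs k)
    | _ => rfl

lemma run_aba_apply (m n : ℕ) (s : BlockState) :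
    run m (a * b ^ n * a) s = readA m (run m (b ^ n) (readA m s)) := by
  rw [run_mul_apply, run_mul_apply, run_a]

lemma readA_readA (m : ℕ) {s : BlockState} (hs : s ≠ start) :
    readA m (readA m s) = readA m s := by
  cases s <;> simp_all [readA, apply_ite]

lemma readA_ne_count (m : ℕ) {s : BlockState} (hs : s ≠ start) (k : ℕ) :
    readA m s ≠ count k := by
  cases s <;> simp only [readA] <;> (try split_ifs) <;> simp_all

lemma run_aba_apply_of_ne_start (m n : ℕ) {s : BlockState} (hs : s ≠ start) :
    run m (a * b ^ n * a) s = readA m s := by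
  rw [run_aba_apply, run_b_pow_of_ne_count _ _ (readA_ne_count m hs), readA_readA m hs]

lemma run_aba_apply_start (m n : ℕ) :
    run m (a * b ^ n * a) start = if n = m then hit else miss := by
  rw [run_aba_apply, readA, run_b_pow_count, zero_add, readA]

lemma run_aba_eq_iff (m n k : ℕ) :
    run m (a * b ^ n * a) = run m (a * b ^ k * a) ↔ (n = m ↔ k = m) := by
  constructor
  · intro h
    have := congrFun h start
    rw [run_aba_apply_start, run_aba_apply_start] at this
    split_ifs at this <;> simp_all
  · intro hnk
    funext s
    by_cases hs : s = start
    · rw [hs, run_aba_apply_start, run_aba_apply_start]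
      split_ifs <;> tauto
    · rw [run_aba_apply_of_ne_start m n hs, run_aba_apply_of_ne_start m k hs]

end BlockState

lemma conGen_rMUpTo_le_ker (N : ℕ) : conGen (rMUpTo N) ≤ Con.ker (BlockState.run (N + 2)) := by
  refine Con.conGen_le.mpr ?_
  rintro _ _ ⟨n, -, hn, rfl, rfl⟩
  have := (BlockState.run_aba_eq_iff (N + 2) n 1).mpr (by omega)
  rwa [pow_one] at this

/-- The congruence generated by `rM` is not generated by any finite set of pairs of words;
hence `M` is not finitely presented. -/
theorem stmt0 :
    ¬ ∃ S : Set (WM × WM), S.Finite ∧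
      conGen (fun x y => (x, y) ∈ S) = conGen rM := by
  rintro ⟨S, hS, hEq⟩
  obtain ⟨N, hN⟩ :=
    Con.exists_conGen_le_of_finite rMUpTo_monotone (fun _ _ => exists_rMUpTo_of_rM) hS hEq.le
  have hrel : conGen (rMUpTo N) (a * b ^ (N + 2) * a) (a * b ^ 1 * a) :=
    hN (hEq ▸ ConGen.Rel.of _ _ ⟨N + 2, by omega, rfl, by rw [pow_one]⟩)
  have hsep := (BlockState.run_aba_eq_iff (N + 2) (N + 2) 1).mp (conGen_rMUpTo_le_ker N hrel)
  omega
end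

section
/- For the congruence on {a,b}* generated by R_M = {(ab^n a, aba) : n ≥ 2}, no finite subset of R_M generates the same congruence: for every n₀ ≥ 2, the words ab^{n₀+1}a and aba are not related by the congruence generated by {(ab^n a, aba) : 2 ≤ n ≤ n₀}. -/
open Relation

/-!
The words `a b^n a` with `n ≤ m` all act in the same way on the states of an automaton that
records whether some run of more than `m` letters `b` occurs between two letters `a`, while
`a b^{m+1} a` raises that flag. For `m = n₀` the kernel of this action is a congruence that
contains the rules with `n ≤ n₀` but separates `a b^{n₀+1} a` from `a b a`.
-/

/-- A state is the length of the current run of `b`s (`none` until an `a` has been read) and a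
flag recording that a run of more than `m` letters `b` was closed by an `a`. Since
`Function.End` composes right to left, words are read from the right. -/
def longGapStep (m : ℕ) : AB → Function.End (Option ℕ × Bool)
  | AB.a => fun s => (some 0, s.2 || s.1.any (m < ·))
  | AB.b => fun s => (s.1.map (· + 1), s.2)

def longGapMonitor (m : ℕ) : WM →* Function.End (Option ℕ × Bool) :=
  FreeMonoid.lift (longGapStep m)

lemma longGapMonitor_mul_apply (m : ℕ) (x y : WM) (s : Option ℕ × Bool) :
    longGapMonitor m (x * y) s = longGapMonitor m x (longGapMonitor m y s) := by
  rw [map_mul]; rfl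

lemma longGapMonitor_a_apply (m : ℕ) (s : Option ℕ × Bool) :
    longGapMonitor m a s = (some 0, s.2 || s.1.any (m < ·)) := rfl

lemma longGapMonitor_b_apply (m : ℕ) (s : Option ℕ × Bool) :
    longGapMonitor m b s = (s.1.map (· + 1), s.2) := rfl

lemma longGapMonitor_b_pow_apply (m n : ℕ) (s : Option ℕ × Bool) :
    longGapMonitor m (b ^ n) s = (s.1.map (· + n), s.2) := by
  induction n generalizing s with
  | zero => simp only [pow_zero, map_one, add_zero, Option.map_id']; rfl
  | succ k ih =>
    rw [pow_succ, longGapMonitor_mul_apply, longGapMonitor_b_apply, ih]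
    simp [Option.map_map, Function.comp_def, add_assoc, add_comm 1 k]

lemma longGapMonitor_a_mul_b_pow_mul_a_apply (m n : ℕ) (s : Option ℕ × Bool) :
    longGapMonitor m (a * b ^ n * a) s = (some 0, s.2 || s.1.any (m < ·) || decide (m < n)) := by
  simp only [longGapMonitor_mul_apply, longGapMonitor_a_apply, longGapMonitor_b_pow_apply]
  simp

lemma longGapMonitor_a_mul_b_pow_mul_a_eq {m n k : ℕ} (hn : n ≤ m) (hk : k ≤ m) :
    longGapMonitor m (a * b ^ n * a) = longGapMonitor m (a * b ^ k * a) := by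
  funext s
  simp only [longGapMonitor_a_mul_b_pow_mul_a_apply, decide_eq_false (Nat.not_lt.2 hn),
    decide_eq_false (Nat.not_lt.2 hk)]

lemma longGapMonitor_a_mul_b_pow_mul_a_ne {m n k : ℕ} (hn : m < n) (hk : k ≤ m) :
    longGapMonitor m (a * b ^ n * a) ≠ longGapMonitor m (a * b ^ k * a) := by
  intro h
  have := congrFun h (none, false)
  simp only [longGapMonitor_a_mul_b_pow_mul_a_apply] at this
  simp [hn] at this
  omega

/-- For every `n₀ ≥ 2`, the words `a b^{n₀+1} a` and `a b a` are not related by the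
congruence generated by the rules with `2 ≤ n ≤ n₀`. -/
theorem stmt1 (n₀ : ℕ) (hn₀ : 2 ≤ n₀) :
    ¬ conGen (fun x y => ∃ n, 2 ≤ n ∧ n ≤ n₀ ∧ x = a * b ^ n * a ∧ y = a * b * a)
        (a * b ^ (n₀ + 1) * a) (a * b * a) := by
  have hb : (a * b * a : WM) = a * b ^ 1 * a := by rw [pow_one]
  have hker : conGen (fun x y => ∃ n, 2 ≤ n ∧ n ≤ n₀ ∧ x = a * b ^ n * a ∧ y = a * b * a) ≤
      Con.ker (longGapMonitor n₀) := by
    refine Con.conGen_le.2 ?_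
    rintro x y ⟨n, -, hn, rfl, rfl⟩
    rw [Con.ker_rel, hb]
    exact longGapMonitor_a_mul_b_pow_mul_a_eq hn (by omega)
  intro h
  have hrel := hker h
  rw [Con.ker_rel, hb] at hrel
  exact longGapMonitor_a_mul_b_pow_mul_a_ne (Nat.lt_succ_self n₀) (by omega) hrel
end

section
/- The rewriting system R_M over {a,b} with rules ab^n a → aba (n ≥ 2) is locally confluent: if w → u and w → v in one step, then there exists z with u →* z and v →* z. -/
open Relation

/-!
Since `b ^ m` contains no `a`, two occurrences of redexes `a b^m a` and `a b^n a` in a word either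
coincide, are disjoint, or overlap in a single letter `a`. Disjoint redexes can be contracted in
either order, and both one-step reducts of the overlap `a b^m a b^n a` contract to `a b a b a`.
-/

open List

theorem List.append_cons_eq_append_cons_of_not_mem {α : Type*} {x : α} {u q t r : List α}
    (hu : x ∉ u) (h : u ++ x :: q = t ++ x :: r) :
    (t = u ∧ q = r) ∨ ∃ s, t = u ++ x :: s ∧ q = s ++ x :: r := by
  rcases append_eq_append_iff.1 h with ⟨s, rfl, hs⟩ | ⟨s, rfl, hs⟩
  · rcases s with _ | ⟨z, s⟩
    · exact .inl ⟨by simp, by simpa using hs⟩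
    · obtain ⟨rfl, rfl⟩ := cons_eq_cons.1 hs
      exact .inr ⟨s, rfl, rfl⟩
  · rcases s with _ | ⟨z, s⟩
    · exact .inl ⟨by simp, by simpa using hs.symm⟩
    · obtain rfl := (cons_eq_cons.1 hs).1
      simp at hu

theorem List.cons_replicate_append_cons_eq_append {α : Type*} {x y : α} (hxy : y ≠ x)
    {m n : ℕ} {q q' t : List α}
    (h : x :: (replicate m y ++ x :: q) = t ++ x :: (replicate n y ++ x :: q')) :
    (t = [] ∧ m = n ∧ q = q') ∨
      (t = x :: replicate m y ∧ q = replicate n y ++ x :: q') ∨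
      ∃ s, t = x :: (replicate m y ++ x :: s) ∧ q = s ++ x :: (replicate n y ++ x :: q') := by
  have hx (k : ℕ) : x ∉ replicate k y := fun hk => hxy (eq_of_mem_replicate hk).symm
  rcases t with _ | ⟨z, t⟩
  · rcases append_cons_eq_append_cons_of_not_mem (hx m) (cons_eq_cons.1 h).2 with
      ⟨hmn, rfl⟩ | ⟨s, hn, -⟩
    · exact .inl ⟨rfl, replicate_left_inj.1 hmn.symm, rfl⟩
    · exact absurd (hn ▸ mem_append_right _ mem_cons_self) (hx n)
  · rw [cons_append] at h
    obtain ⟨rfl, ht⟩ := cons_eq_cons.1 h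
    rcases append_cons_eq_append_cons_of_not_mem (hx m) ht with ⟨rfl, rfl⟩ | ⟨s, rfl, rfl⟩
    · exact .inr (.inl ⟨rfl, rfl⟩)
    · exact .inr (.inr ⟨s, rfl, rfl⟩)

theorem FreeMonoid.toList_of_pow {α : Type*} (x : α) (n : ℕ) :
    toList (of x ^ n) = replicate n x := by
  induction n with
  | zero => rfl
  | succ n ih => rw [pow_succ, toList_mul, ih, toList_of, replicate_succ']

theorem toList_mul_redex_mul (p q : WM) (m : ℕ) :
    FreeMonoid.toList (p * (a * b ^ m * a) * q) =
      FreeMonoid.toList p ++ AB.a :: (replicate m AB.b ++ AB.a :: FreeMonoid.toList q) := by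
  simp [a, b, FreeMonoid.toList_mul, FreeMonoid.toList_of_pow]

theorem step_redex {m : ℕ} (hm : 2 ≤ m) (p q : WM) :
    Step rM (p * (a * b ^ m * a) * q) (p * (a * b * a) * q) :=
  ⟨_, _, p, q, ⟨m, hm, rfl, rfl⟩, rfl, rfl⟩

theorem join_of_disjoint {m n : ℕ} (hm : 2 ≤ m) (hn : 2 ≤ n) (p s q : WM) :
    Join (ReflTransGen (Step rM)) (p * (a * b * a) * (s * (a * b ^ n * a) * q))
      (p * (a * b ^ m * a) * s * (a * b * a) * q) := by
  refine ⟨p * (a * b * a) * s * (a * b * a) * q, .single ?_, .single ?_⟩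
  · simpa only [mul_assoc] using step_redex hn (p * (a * b * a) * s) q
  · simpa only [mul_assoc] using step_redex hm p (s * (a * b * a) * q)

theorem join_of_adjacent {m n : ℕ} (hm : 2 ≤ m) (hn : 2 ≤ n) (p q : WM) :
    Join (ReflTransGen (Step rM)) (p * (a * b * a) * (b ^ n * a * q))
      (p * a * b ^ m * (a * b * a) * q) := by
  refine ⟨p * (a * b * a) * b * a * q, .single ?_, .single ?_⟩
  · simpa only [mul_assoc] using step_redex hn (p * a * b) q
  · simpa only [mul_assoc] using step_redex hm p (b * a * q)

theorem join_of_overlap {m n : ℕ} (hm : 2 ≤ m) (hn : 2 ≤ n) {p q p' q' : WM} {t : List AB}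
    (hp : FreeMonoid.toList p' = FreeMonoid.toList p ++ t)
    (h : AB.a :: (replicate m AB.b ++ AB.a :: FreeMonoid.toList q) =
      t ++ AB.a :: (replicate n AB.b ++ AB.a :: FreeMonoid.toList q')) :
    Join (ReflTransGen (Step rM)) (p * (a * b * a) * q) (p' * (a * b * a) * q') := by
  have eq_of_toList {x y : WM} (hxy : FreeMonoid.toList x = FreeMonoid.toList y) : x = y :=
    FreeMonoid.toList.injective hxy
  rcases cons_replicate_append_cons_eq_append AB.noConfusion h with
    ⟨rfl, rfl, hq⟩ | ⟨rfl, hq⟩ | ⟨s, rfl, hq⟩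
  · obtain rfl : p' = p := eq_of_toList (by simpa using hp)
    obtain rfl : q' = q := eq_of_toList hq.symm
    exact ⟨_, .refl, .refl⟩
  · obtain rfl : p' = p * a * b ^ m :=
      eq_of_toList (by simp [hp, a, b, FreeMonoid.toList_mul, FreeMonoid.toList_of_pow])
    obtain rfl : q = b ^ n * a * q' :=
      eq_of_toList (by simp [hq, a, b, FreeMonoid.toList_mul, FreeMonoid.toList_of_pow])
    exact join_of_adjacent hm hn p q'
  · obtain rfl : p' = p * (a * b ^ m * a) * FreeMonoid.ofList s :=
      eq_of_toList (by simp [hp, a, b, FreeMonoid.toList_mul, FreeMonoid.toList_of_pow])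
    obtain rfl : q = FreeMonoid.ofList s * (a * b ^ n * a) * q' :=
      eq_of_toList (by simp [hq, a, b, FreeMonoid.toList_mul, FreeMonoid.toList_of_pow])
    exact join_of_disjoint hm hn p _ q'

/-- The rewriting system `R_M` is locally confluent. -/
theorem stmt3 :
    ∀ w u v : WM, Step rM w u → Step rM w v →
      ∃ z, ReflTransGen (Step rM) u z ∧ ReflTransGen (Step rM) v z := by
  rintro w _ _ ⟨_, _, p, q, ⟨m, hm, rfl, rfl⟩, hw, rfl⟩ ⟨_, _, p', q', ⟨n, hn, rfl, rfl⟩, hw', rfl⟩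
  have h := congrArg FreeMonoid.toList (hw.symm.trans hw')
  rw [toList_mul_redex_mul, toList_mul_redex_mul] at h
  rcases append_eq_append_iff.1 h with ⟨t, hp, hq⟩ | ⟨t, hp, hq⟩
  · exact join_of_overlap hm hn hp hq
  · exact symm (join_of_overlap hn hm hp hq)
end

section
/- The rewriting system R_N over {c,d} with rules cd²c → cdc, cd⁴ → cdc, cd³c² → cdc, cd³cdc → cdc is noetherian and locally confluent, hence complete. -/
/-!
Every rule of `R_N` shortens words, so rewriting terminates. All four rules have the same
right-hand side `cdc`, and no left-hand side is a factor of another. Two left-hand sides can only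
overlap in a common border of `cdc` (here the letter `c`); if `cdc = y t = t x` and the word is
`p s t r q` with `s t`, `t r` left-hand sides, both one-step rewrites reduce in one more step to
`p y t x q`. Hence any two one-step rewrites of a word coincide or rejoin after one step each.
-/

open Relation

namespace List

variable {α : Type*}

theorem append_append_eq_append_append_cases {p₁ l₁ q₁ p₂ l₂ q₂ : List α}
    (h : p₁ ++ l₁ ++ q₁ = p₂ ++ l₂ ++ q₂) (hp : p₁.length ≤ p₂.length) :
    (∃ m, p₂ = p₁ ++ l₁ ++ m ∧ q₁ = m ++ l₂ ++ q₂) ∨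
    (∃ s r, l₁ = s ++ l₂ ++ r ∧ p₂ = p₁ ++ s ∧ q₂ = r ++ q₁) ∨
    (∃ s t r, r ≠ [] ∧ l₁ = s ++ t ∧ l₂ = t ++ r ∧ p₂ = p₁ ++ s ∧ q₁ = r ++ q₂) := by
  obtain ⟨s, rfl⟩ : p₁ <+: p₂ := prefix_of_prefix_length_le
    ⟨l₁ ++ q₁, by rw [← append_assoc, h]⟩ ⟨l₂ ++ q₂, by rw [append_assoc]⟩ hp
  simp only [append_assoc] at h
  rcases append_eq_append_iff.mp (append_cancel_left h) with ⟨m, rfl, rfl⟩ | ⟨t, rfl, h'⟩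
  · exact .inl ⟨m, by simp, by simp⟩
  rcases append_eq_append_iff.mp h' with ⟨r, rfl, rfl⟩ | ⟨r, rfl, rfl⟩
  · exact .inr (.inl ⟨s, r, by simp, rfl, rfl⟩)
  by_cases hr : r = []
  · subst hr
    exact .inr (.inl ⟨s, [], by simp, rfl, by simp⟩)
  · exact .inr (.inr ⟨s, t, r, hr, rfl, rfl, rfl, rfl⟩)

end List

theorem wellFounded_step_of_length_lt {α : Type} {R : FreeMonoid α → FreeMonoid α → Prop}
    (hR : ∀ u v, R u v → v.length < u.length) :
    WellFounded fun x y => Step R y x := by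
  refine Subrelation.wf (fun {x y} h => ?_) (measure FreeMonoid.length).wf
  obtain ⟨u, v, p, q, huv, rfl, rfl⟩ := h
  show (p * v * q).length < (p * u * q).length
  simp only [FreeMonoid.length_mul]
  have := hR u v huv
  omega

section SingleRightHandSide

variable {α : Type} {R : FreeMonoid α → FreeMonoid α → Prop} {S : List (List α)} {e : List α}

theorem step_iff_exists_toList (hR : ∀ u v, R u v ↔ u.toList ∈ S ∧ v.toList = e)
    {x y : FreeMonoid α} :
    Step R x y ↔ ∃ p l q, l ∈ S ∧ x.toList = p ++ l ++ q ∧ y.toList = p ++ e ++ q := by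
  constructor
  · rintro ⟨u, v, p, q, huv, rfl, rfl⟩
    obtain ⟨hu, hv⟩ := (hR u v).1 huv
    exact ⟨p.toList, u.toList, q.toList, hu, rfl, by simp [FreeMonoid.toList_mul, hv]⟩
  · rintro ⟨p, l, q, hl, hx, hy⟩
    refine ⟨.ofList l, .ofList e, .ofList p, .ofList q, (hR _ _).2 ⟨hl, rfl⟩, ?_, ?_⟩ <;>
      apply FreeMonoid.toList.injective <;> simp [FreeMonoid.toList_mul, hx, hy]

theorem eq_or_exists_common_step (hR : ∀ u v, R u v ↔ u.toList ∈ S ∧ v.toList = e)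
    (hinfix : ∀ l ∈ S, ∀ l' ∈ S, l' <:+: l → l' = l)
    (hoverlap : ∀ l ∈ S, ∀ l' ∈ S, ∀ t ∈ l.tails, t <+: l' →
      t.length < l.length → t.length < l'.length → t <+: e ∧ t <:+ e)
    {w u v : FreeMonoid α} (hu : Step R w u) (hv : Step R w v) :
    u = v ∨ ∃ z, Step R u z ∧ Step R v z := by
  rw [step_iff_exists_toList hR] at hu hv
  obtain ⟨p₁, l₁, q₁, hl₁, hw₁, hu⟩ := hu
  obtain ⟨p₂, l₂, q₂, hl₂, hw₂, hv⟩ := hv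
  wlog hp : p₁.length ≤ p₂.length generalizing u v p₁ l₁ q₁ p₂ l₂ q₂
  · rcases this p₂ l₂ q₂ hl₂ hw₂ hv p₁ l₁ q₁ hl₁ hw₁ hu (by omega) with h | ⟨z, hv', hu'⟩
    · exact .inl h.symm
    · exact .inr ⟨z, hu', hv'⟩
  simp only [step_iff_exists_toList hR, hu, hv]
  rcases List.append_append_eq_append_append_cases (hw₁.symm.trans hw₂) hp with
    ⟨m, rfl, rfl⟩ | ⟨s, r, rfl, rfl, rfl⟩ | ⟨s, t, r, hr, rfl, rfl, rfl, rfl⟩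
  · refine .inr ⟨.ofList (p₁ ++ e ++ m ++ e ++ q₂), ⟨p₁ ++ e ++ m, l₂, q₂, hl₂, ?_, ?_⟩,
      ⟨p₁, l₁, m ++ e ++ q₂, hl₁, ?_, ?_⟩⟩ <;> simp
  · have hsr : s ++ l₂ ++ r = l₂ := (hinfix _ hl₁ _ hl₂ ⟨s, r, rfl⟩).symm
    have hlen := congrArg List.length hsr
    simp only [List.length_append] at hlen
    obtain ⟨rfl, rfl⟩ : s = [] ∧ r = [] := by
      simp only [← List.length_eq_zero_iff]
      omega
    exact .inl (FreeMonoid.toList.injective (by simp [hu, hv]))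
  · by_cases hs : s = []
    · subst hs
      have htr := hinfix _ hl₂ _ hl₁ (List.prefix_append t r).isInfix
      exact absurd (by simpa using htr.symm) hr
    obtain ⟨⟨x, hx⟩, ⟨y, hy⟩⟩ := hoverlap _ hl₁ _ hl₂ t
      ((List.mem_tails _ _).2 (List.suffix_append s t)) (List.prefix_append t r)
      (by simpa [Nat.pos_iff_ne_zero] using hs) (by simpa [Nat.pos_iff_ne_zero] using hr)
    have hyx : y ++ e = e ++ x :=
      calc y ++ e = y ++ t ++ x := by rw [List.append_assoc, hx]
        _ = e ++ x := by rw [hy]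
    refine .inr ⟨.ofList (p₁ ++ y ++ e ++ q₂), ⟨p₁ ++ y, t ++ r, q₂, hl₂, ?_, rfl⟩,
      ⟨p₁, s ++ t, x ++ q₂, hl₁, ?_, ?_⟩⟩
    · simp [← hy]
    · simp [← hx]
    · simp only [FreeMonoid.toList_ofList, List.append_assoc, List.append_cancel_left_eq]
      rw [← List.append_assoc, hyx, List.append_assoc]

end SingleRightHandSide

instance : DecidableEq CD := fun x y => by
  cases x <;> cases y <;> first | exact .isTrue rfl | exact .isFalse nofun

def rNLhs : List (List CD) :=
  [[.c, .d, .d, .c], [.c, .d, .d, .d, .d], [.c, .d, .d, .d, .c, .c], [.c, .d, .d, .d, .c, .d, .c]]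

theorem rN_iff (u v : WN) : rN u v ↔ u.toList ∈ rNLhs ∧ v.toList = [.c, .d, .c] := by
  simp only [rN, rNLhs, List.mem_cons, List.not_mem_nil, or_false,
    ← FreeMonoid.toList.apply_eq_iff_eq (x := v)]
  rfl

theorem rNLhs_infix : ∀ l ∈ rNLhs, ∀ l' ∈ rNLhs, l' <:+: l → l' = l := by decide

theorem rNLhs_overlap : ∀ l ∈ rNLhs, ∀ l' ∈ rNLhs, ∀ t ∈ l.tails, t <+: l' →
    t.length < l.length → t.length < l'.length → t <+: [.c, .d, .c] ∧ t <:+ [.c, .d, .c] := by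
  decide

theorem rN_length_lt {u v : WN} (h : rN u v) : v.length < u.length := by
  obtain ⟨hu, hv⟩ := (rN_iff u v).1 h
  simp only [rNLhs, List.mem_cons, List.not_mem_nil, or_false] at hu
  simp only [FreeMonoid.length, hv]
  rcases hu with hu | hu | hu | hu <;> simp [hu]

/-- The rewriting system `R_N` is noetherian and locally confluent, hence complete. -/
theorem stmt4 :
    (WellFounded fun x y : WN => Step rN y x) ∧
    (∀ w u v : WN, Step rN w u → Step rN w v →
      ∃ z, ReflTransGen (Step rN) u z ∧ ReflTransGen (Step rN) v z) := by
  refine ⟨wellFounded_step_of_length_lt fun _ _ => rN_length_lt, fun w u v hu hv => ?_⟩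
  rcases eq_or_exists_common_step rN_iff rNLhs_infix rNLhs_overlap hu hv with
    rfl | ⟨z, huz, hvz⟩
  · exact ⟨u, .refl, .refl⟩
  · exact ⟨z, .single huz, .single hvz⟩
end

section
/- A word w ∈ {a,b}* is irreducible with respect to R_M = {(ab^n a, aba) : n ≥ 2} if and only if w has the form b^s, or b^s u, or b^s u b^t, where s ≥ 0, t ≥ 1, and u is a word of the form a^{i₀} b a^{i₁} b ⋯ b a^{i_k} with k ≥ 0 and all i_j ≥ 1. -/
open Relation

/-! Reading a word from the left, both sides of the equivalence obey the same recursion: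
prepending `b` changes neither of them, and prepending `a` preserves them exactly when the word
does not begin with `b ^ n * a` for some `n ≥ 2` (for irreducibility, because that is when a
redex `a * b ^ n * a` appears as a prefix). Induction on the word then proves the theorem. -/

open FreeMonoid

theorem List.prod_intersperse_mul_cons {M : Type*} [Monoid M] (s x y : M) (L : List M) :
    ((x * y :: L).intersperse s).prod = x * ((y :: L).intersperse s).prod := by
  cases L <;> simp [List.intersperse_cons_cons, mul_assoc]

namespace FreeMonoid

variable {α : Type*}

theorem of_mul_eq_of_mul_iff {x y : α} {v w : FreeMonoid α} :
    of x * v = of y * w ↔ x = y ∧ v = w := by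
  rw [← toList.injective.eq_iff, toList_of_mul, toList_of_mul, List.cons.injEq]
  rfl

theorem of_mul_ne_one (x : α) (w : FreeMonoid α) : of x * w ≠ 1 := by
  rw [← toList.injective.ne_iff, toList_of_mul]
  exact List.cons_ne_nil _ _

end FreeMonoid

section Irred

variable {α : Type} {R : FreeMonoid α → FreeMonoid α → Prop}

theorem irred_one_of_forall_ne_one (hR : ∀ u v, R u v → u ≠ 1) : Irred R 1 := by
  rintro _ ⟨u, v, p, q, huv, h, -⟩
  refine hR u v huv (length_eq_zero.1 ?_)
  have := congrArg length h
  rw [length_mul, length_mul, length_one] at this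
  omega

theorem irred_of_mul_iff (x : α) (w : FreeMonoid α) :
    Irred R (of x * w) ↔ Irred R w ∧ ∀ u v q, R u v → of x * w ≠ u * q := by
  constructor
  · intro h
    refine ⟨fun _ ⟨u, v, p, q, huv, hw, _⟩ => h _ ⟨u, v, of x * p, q, huv, ?_, rfl⟩,
      fun u v q huv hq => h _ ⟨u, v, 1, q, huv, by rw [hq, one_mul], rfl⟩⟩
    rw [hw, mul_assoc, mul_assoc, mul_assoc]
  · rintro ⟨hw, hprefix⟩ _ ⟨u, v, p, q, huv, hxw, -⟩
    cases p with
    | one => exact hprefix u v q huv (by rwa [one_mul] at hxw)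
    | of_mul y p =>
      rw [mul_assoc, mul_assoc, of_mul_eq_of_mul_iff] at hxw
      exact hw _ ⟨u, v, p, q, huv, by rw [hxw.2, mul_assoc], rfl⟩

end Irred

theorem a_mul_ne_b_mul (v w : WM) : a * v ≠ b * w := by
  simp [a, b, of_mul_eq_of_mul_iff]

theorem a_not_mem_b_pow (t : ℕ) : AB.a ∉ b ^ t := by
  induction t with
  | zero => exact notMem_one
  | succ t ih => simpa [pow_succ, mem_mul, b, mem_of] using ih

def HasLongGapPrefix (w : WM) : Prop := ∃ n, 2 ≤ n ∧ ∃ q, w = b ^ n * a * q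

theorem HasLongGapPrefix.exists_eq {w : WM} (h : HasLongGapPrefix w) :
    ∃ m q, w = b * (b * (b ^ m * (a * q))) := by
  obtain ⟨n, hn, q, rfl⟩ := h
  obtain ⟨m, rfl⟩ := Nat.exists_eq_add_of_le hn
  exact ⟨m, q, by simp only [pow_add, pow_two, mul_assoc]⟩

theorem irred_rM_one : Irred rM 1 :=
  irred_one_of_forall_ne_one fun _ _ ⟨n, _, hu, _⟩ => by
    rw [hu, mul_assoc]
    exact of_mul_ne_one AB.a (b ^ n * a)

theorem irred_rM_b_mul (w : WM) : Irred rM (b * w) ↔ Irred rM w := by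
  refine (irred_of_mul_iff AB.b w).trans (and_iff_left ?_)
  rintro _ _ q ⟨n, -, rfl, -⟩ h
  exact a_mul_ne_b_mul (b ^ n * a * q) w (by simp only [← mul_assoc]; exact h.symm)

theorem irred_rM_a_mul (w : WM) : Irred rM (a * w) ↔ Irred rM w ∧ ¬ HasLongGapPrefix w := by
  refine (irred_of_mul_iff AB.a w).trans (and_congr_right fun _ => ?_)
  constructor
  · rintro h ⟨n, hn, q, rfl⟩
    exact h _ _ q ⟨n, hn, rfl, rfl⟩ (by simp only [a, mul_assoc])
  · rintro h _ _ q ⟨n, hn, rfl, -⟩ hq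
    refine h ⟨n, hn, q, mul_left_cancel (a := a) (hq.trans ?_)⟩
    simp only [mul_assoc]

theorem a_mem_UM : a ∈ UM := ⟨[1], by simp, by simp, by simp⟩

theorem a_mul_mem_UM {u : WM} (hu : u ∈ UM) : a * u ∈ UM := by
  obtain ⟨l, hl, hpos, rfl⟩ := hu
  obtain ⟨i, l, rfl⟩ := List.exists_cons_of_ne_nil hl
  refine ⟨(i + 1) :: l, List.cons_ne_nil _ _, ?_, ?_⟩
  · exact List.forall_mem_cons.2 ⟨Nat.le_add_left 1 i, (List.forall_mem_cons.1 hpos).2⟩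
  · simp only [List.map_cons, pow_succ', List.prod_intersperse_mul_cons]

theorem a_mul_b_mul_mem_UM {u : WM} (hu : u ∈ UM) : a * (b * u) ∈ UM := by
  obtain ⟨l, hl, hpos, rfl⟩ := hu
  obtain ⟨i, l, rfl⟩ := List.exists_cons_of_ne_nil hl
  refine ⟨1 :: i :: l, List.cons_ne_nil _ _, List.forall_mem_cons.2 ⟨le_rfl, hpos⟩, ?_⟩
  simp [List.intersperse_cons_cons]

theorem mem_UM_cases {u : WM} (hu : u ∈ UM) :
    u = a ∨ ∃ v ∈ UM, u = a * v ∨ u = a * (b * v) := by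
  obtain ⟨l, hl, hpos, rfl⟩ := hu
  obtain ⟨i, l, rfl⟩ := List.exists_cons_of_ne_nil hl
  obtain ⟨hi, htail⟩ := List.forall_mem_cons.1 hpos
  obtain ⟨j, rfl⟩ := Nat.exists_eq_add_one.2 hi
  rcases j with _ | j
  · cases l with
    | nil => exact Or.inl (by simp)
    | cons k l =>
      exact Or.inr ⟨_, ⟨k :: l, List.cons_ne_nil _ _, htail, rfl⟩,
        Or.inr (by simp [List.intersperse_cons_cons])⟩
  · refine Or.inr ⟨_, ⟨(j + 1) :: l, List.cons_ne_nil _ _,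
      List.forall_mem_cons.2 ⟨Nat.le_add_left 1 j, htail⟩, rfl⟩, Or.inl ?_⟩
    simp only [List.map_cons, pow_succ', List.prod_intersperse_mul_cons]

theorem exists_eq_a_mul_of_mem_UM {u : WM} (hu : u ∈ UM) : ∃ v, u = a * v := by
  rcases mem_UM_cases hu with rfl | ⟨v, -, rfl | rfl⟩
  exacts [⟨1, (mul_one a).symm⟩, ⟨v, rfl⟩, ⟨b * v, rfl⟩]

def NMTail : Set WM := {x | x = 1 ∨ ∃ u ∈ UM, ∃ t : ℕ, x = u * b ^ t}

theorem mem_NM_iff {w : WM} : w ∈ NM ↔ ∃ s, ∃ x ∈ NMTail, w = b ^ s * x := by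
  constructor
  · rintro (⟨s, rfl⟩ | ⟨s, u, hu, rfl⟩ | ⟨s, t, u, hu, -, rfl⟩)
    · exact ⟨s, 1, Or.inl rfl, (mul_one _).symm⟩
    · exact ⟨s, u, Or.inr ⟨u, hu, 0, by rw [pow_zero, mul_one]⟩, rfl⟩
    · exact ⟨s, u * b ^ t, Or.inr ⟨u, hu, t, rfl⟩, mul_assoc _ _ _⟩
  · rintro ⟨s, x, rfl | ⟨u, hu, t, rfl⟩, rfl⟩
    · exact Or.inl ⟨s, mul_one _⟩
    · rcases Nat.eq_zero_or_pos t with rfl | ht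
      · exact Or.inr (Or.inl ⟨s, u, hu, by rw [pow_zero, mul_one]⟩)
      · exact Or.inr (Or.inr ⟨s, t, u, hu, ht, (mul_assoc _ _ _).symm⟩)

theorem b_mul_notMem_NMTail (w : WM) : b * w ∉ NMTail := by
  rintro (h | ⟨u, hu, t, h⟩)
  · exact of_mul_ne_one _ _ h
  · obtain ⟨v, rfl⟩ := exists_eq_a_mul_of_mem_UM hu
    exact a_mul_ne_b_mul (v * b ^ t) w (by rw [h, mul_assoc])

theorem b_mul_mem_NM_iff (w : WM) : b * w ∈ NM ↔ w ∈ NM := by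
  simp only [mem_NM_iff]
  constructor
  · rintro ⟨_ | s, x, hx, h⟩
    · rw [pow_zero, one_mul] at h
      exact absurd (h ▸ hx) (b_mul_notMem_NMTail w)
    · rw [pow_succ', mul_assoc] at h
      exact ⟨s, x, hx, mul_left_cancel h⟩
  · rintro ⟨s, x, hx, rfl⟩
    exact ⟨s + 1, x, hx, by rw [pow_succ', mul_assoc]⟩

theorem a_mul_mem_NM_iff (w : WM) : a * w ∈ NM ↔ a * w ∈ NMTail := by
  rw [mem_NM_iff]
  constructor
  · rintro ⟨_ | s, x, hx, h⟩
    · rwa [h, pow_zero, one_mul]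
    · rw [pow_succ', mul_assoc] at h
      exact absurd h (a_mul_ne_b_mul _ _)
  · exact fun h => ⟨0, _, h, by rw [pow_zero, one_mul]⟩

theorem a_mul_mem_NMTail_iff (w : WM) :
    a * w ∈ NMTail ↔ w ∈ NM ∧ ¬ HasLongGapPrefix w := by
  constructor
  · rintro (h | ⟨u, hu, t, h⟩)
    · exact absurd h (of_mul_ne_one _ _)
    rcases mem_UM_cases hu with rfl | ⟨v, hv, rfl | rfl⟩
    · obtain rfl := mul_left_cancel h
      refine ⟨Or.inl ⟨t, rfl⟩, fun ⟨n, _, q, hq⟩ => a_not_mem_b_pow t ?_⟩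
      rw [hq]; simp [mem_mul, a, mem_of]
    · rw [mul_assoc] at h
      obtain rfl := mul_left_cancel h
      refine ⟨mem_NM_iff.2 ⟨0, _, Or.inr ⟨v, hv, t, rfl⟩, (one_mul _).symm⟩, fun hl => ?_⟩
      obtain ⟨m, q, hq⟩ := hl.exists_eq
      obtain ⟨v, rfl⟩ := exists_eq_a_mul_of_mem_UM hv
      exact a_mul_ne_b_mul _ _ (by rw [mul_assoc] at hq; exact hq)
    · rw [mul_assoc, mul_assoc] at h
      obtain rfl := mul_left_cancel h
      refine ⟨mem_NM_iff.2 ⟨1, _, Or.inr ⟨v, hv, t, rfl⟩, by rw [pow_one]⟩, fun hl => ?_⟩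
      obtain ⟨m, q, hq⟩ := hl.exists_eq
      obtain ⟨v, rfl⟩ := exists_eq_a_mul_of_mem_UM hv
      exact a_mul_ne_b_mul _ _ (by rw [mul_assoc] at hq; exact mul_left_cancel hq)
  · rintro ⟨hw, hlong⟩
    obtain ⟨s, x, rfl | ⟨u, hu, t, rfl⟩, rfl⟩ := mem_NM_iff.1 hw
    · exact Or.inr ⟨a, a_mem_UM, s, by rw [mul_one]⟩
    rcases s with _ | _ | s
    · exact Or.inr ⟨a * u, a_mul_mem_UM hu, t, by simp [mul_assoc]⟩
    · exact Or.inr ⟨a * (b * u), a_mul_b_mul_mem_UM hu, t, by simp [mul_assoc]⟩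
    · obtain ⟨v, rfl⟩ := exists_eq_a_mul_of_mem_UM hu
      exact absurd ⟨s + 2, by omega, v * b ^ t, by simp [mul_assoc]⟩ hlong

/-- A word is irreducible for `R_M` iff it is of the form `b^s`, `b^s u`, or `b^s u b^t`
with `u ∈ U_M`, `s ≥ 0`, `t ≥ 1`. -/
theorem stmt6 (w : WM) : Irred rM w ↔ w ∈ NM := by
  induction w using FreeMonoid.recOn with
  | one => exact iff_of_true irred_rM_one (Or.inl ⟨0, rfl⟩)
  | of_mul x w ih =>
    cases x with
    | a =>
      change Irred rM (a * w) ↔ a * w ∈ NM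
      rw [irred_rM_a_mul, ih, a_mul_mem_NM_iff, a_mul_mem_NMTail_iff]
    | b =>
      change Irred rM (b * w) ↔ b * w ∈ NM
      rw [irred_rM_b_mul, ih, b_mul_mem_NM_iff]
end

section
/- A word w ∈ {c,d}* containing at least one c is irreducible with respect to R_N = {cd²c → cdc, cd⁴ → cdc, cd³c² → cdc, cd³cdc → cdc} if and only if w has the form d^p v, or d^p v (d³c)^q d^r, where p ≥ 0, v ∈ U_N, q ≥ 0, 0 ≤ r ≤ 3 and q + r > 0, with U_N = {c^{i₀} d c^{i₁} d ⋯ d c^{i_k} : k ≥ 0, i₀,…,i_k ≥ 1}. -/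
open Relation

/-!
After its first `c`, an irreducible word has `d`-blocks of length one between consecutive `c`s
until the first block `d³` (`cd²c` and `cd⁴` forbid the other lengths); from then on `cd³c²`
and `cd³cdc` leave only blocks `d³` separated by single `c`s, closed by at most `d³`.
Formally, the words without a left-hand side as a factor are those accepted by a seven-state
automaton, and the normal forms are read off from the words accepted from each of its states.
-/

open scoped Pointwise

namespace RN

def redexes : List (List CD) :=
  [[.c, .d, .d, .c], [.c, .d, .d, .d, .d], [.c, .d, .d, .d, .c, .c],
    [.c, .d, .d, .d, .c, .d, .c]]

def HasRedex (t : List CD) : Prop := ∃ u ∈ redexes, u <:+: t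

theorem exists_rN_iff (u : WN) : (∃ v, rN u v) ↔ u.toList ∈ redexes := by
  rw [← FreeMonoid.ofList_toList u]
  simp only [rN, redexes, exists_eq_right, FreeMonoid.toList_ofList, List.mem_cons,
    List.not_mem_nil, or_false]
  simp only [← FreeMonoid.toList.injective.eq_iff, FreeMonoid.toList_ofList]
  rfl

theorem irred_rN_iff (w : WN) : Irred rN w ↔ ¬HasRedex w.toList := by
  simp only [Irred, Step, HasRedex, List.IsInfix]
  constructor
  · rintro h ⟨u, hu, s, t, hst⟩
    obtain ⟨v, huv⟩ := (exists_rN_iff (.ofList u)).2 hu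
    exact h _ ⟨_, v, .ofList s, .ofList t, huv, FreeMonoid.toList.injective hst.symm, rfl⟩
  · rintro h - ⟨u, v, p, q, huv, rfl, -⟩
    exact h ⟨u.toList, (exists_rN_iff u).1 ⟨v, huv⟩, p.toList, q.toList, rfl⟩

theorem hasRedex_cons_iff (x : CD) (t : List CD) :
    HasRedex (x :: t) ↔ (∃ u ∈ redexes, u <+: x :: t) ∨ HasRedex t := by
  simp only [HasRedex, List.infix_cons_iff, ← exists_or, ← and_or_left]

theorem hasRedex_d_cons (t : List CD) : HasRedex (.d :: t) ↔ HasRedex t := by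
  simp [hasRedex_cons_iff, redexes]

theorem hasRedex_c_c_cons (t : List CD) : HasRedex (.c :: .c :: t) ↔ HasRedex (.c :: t) := by
  simp [hasRedex_cons_iff (.c), redexes]

theorem hasRedex_cdc_cons (t : List CD) :
    HasRedex (.c :: .d :: .c :: t) ↔ HasRedex (.c :: t) := by
  simp [hasRedex_cons_iff (.c), hasRedex_d_cons, redexes]

theorem hasRedex_cd3cd2_cons (t : List CD) :
    HasRedex (.c :: .d :: .d :: .d :: .c :: .d :: .d :: t) ↔ HasRedex (.c :: .d :: .d :: t) := by
  simp [hasRedex_cons_iff (.c), hasRedex_d_cons, redexes]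

inductive State : Type | S0 | A | B | C | D | E | F

/-- The automaton recognising the words without a redex: the state reached is the longest suffix
of the input read so far that is a proper prefix of a redex (spelled out by `rep`), and `none`
is the rejecting sink. -/
def step : State → CD → Option State
  | .S0, .c => some .A
  | .S0, .d => some .S0
  | .A, .c => some .A
  | .A, .d => some .B
  | .B, .c => some .A
  | .B, .d => some .C
  | .C, .c => none
  | .C, .d => some .D
  | .D, .c => some .E
  | .D, .d => none
  | .E, .c => none
  | .E, .d => some .F
  | .F, .c => none
  | .F, .d => some .C

def rep : State → List CD
  | .S0 => []
  | .A => [.c]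
  | .B => [.c, .d]
  | .C => [.c, .d, .d]
  | .D => [.c, .d, .d, .d]
  | .E => [.c, .d, .d, .d, .c]
  | .F => [.c, .d, .d, .d, .c, .d]

def run (s : State) (w : WN) : Option State := w.toList.foldlM step s

theorem run_one (s : State) : run s 1 = some s := rfl

theorem run_of_mul (s : State) (x : CD) (w : WN) :
    run s (.of x * w) = (step s x).bind (run · w) := rfl

theorem run_of (s : State) (x : CD) : run s (.of x) = step s x := by
  simp [run]

theorem run_mul (s : State) (u w : WN) : run s (u * w) = (run s u).bind (run · w) := by
  simp [run, FreeMonoid.toList_mul, List.foldlM_append]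

theorem isSome_run_iff (s : State) (w : WN) :
    (run s w).isSome ↔ ¬HasRedex (rep s ++ w.toList) := by
  induction w using FreeMonoid.recOn generalizing s with
  | one => cases s <;> simp [run_one, rep, HasRedex, redexes, List.infix_cons_iff]
  | of_mul x w ih =>
    cases s <;> cases x <;> simp only [run_of_mul, step, Option.bind_some, Option.bind_none, ih,
      rep, FreeMonoid.toList_of_mul, List.cons_append, List.nil_append]
    all_goals first
      | simp only [hasRedex_d_cons, hasRedex_c_c_cons, hasRedex_cdc_cons, hasRedex_cd3cd2_cons]
      | simp [HasRedex, redexes, List.infix_cons_iff]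

theorem prod_intersperse_map_cpow_cons (i : ℕ) (l : List ℕ) :
    (((i :: l).map (c ^ ·)).intersperse d).prod =
      c ^ i * (if l = [] then 1 else d * ((l.map (c ^ ·)).intersperse d).prod) := by
  cases l <;> simp [List.intersperse_cons_cons]

theorem c_mem_UN : c ∈ UN := ⟨[1], by simp, by simp, by simp⟩

theorem c_mul_mem_UN {v : WN} (hv : v ∈ UN) : c * v ∈ UN := by
  obtain ⟨_ | ⟨i, l⟩, hl, hpos, rfl⟩ := hv
  · exact absurd rfl hl
  refine ⟨(i + 1) :: l, by simp, ?_, ?_⟩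
  · simp only [List.mem_cons, forall_eq_or_imp] at hpos ⊢
    exact ⟨by omega, hpos.2⟩
  · simp only [prod_intersperse_map_cpow_cons, pow_succ', mul_assoc]

theorem c_mul_d_mul_mem_UN {v : WN} (hv : v ∈ UN) : c * d * v ∈ UN := by
  obtain ⟨l, hl, hpos, rfl⟩ := hv
  refine ⟨1 :: l, by simp, ?_, ?_⟩
  · simpa using hpos
  · rw [prod_intersperse_map_cpow_cons, if_neg hl, pow_one, mul_assoc]

theorem mem_UN_induction {P : WN → Prop} (hc : P c) (hc_mul : ∀ v, P v → P (c * v))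
    (hcd_mul : ∀ v, P v → P (c * d * v)) {v : WN} (hv : v ∈ UN) : P v := by
  obtain ⟨l, hl, hpos, rfl⟩ := hv
  induction l with
  | nil => exact absurd rfl hl
  | cons i l ih =>
    have hcpow (j : ℕ) {v : WN} (hv : P v) : P (c ^ j * v) := by
      induction j with
      | zero => simpa using hv
      | succ j ihj => simpa only [pow_succ', mul_assoc] using hc_mul _ ihj
    obtain ⟨j, rfl⟩ : ∃ j, i = j + 1 := ⟨i - 1, by have := hpos i (by simp); omega⟩
    rw [prod_intersperse_map_cpow_cons, pow_succ, mul_assoc]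
    refine hcpow j ?_
    split_ifs with hl'
    · simpa using hc
    · rw [← mul_assoc]
      exact hcd_mul _ (ih hl' fun i hi => hpos i (List.mem_cons_of_mem _ hi))

def Tail : Set WN := {τ | ∃ q r, r ≤ 3 ∧ τ = (d ^ 3 * c) ^ q * d ^ r}

theorem dpow_mem_Tail {r : ℕ} (hr : r ≤ 3) : d ^ r ∈ Tail := ⟨0, r, hr, by simp⟩

theorem d3c_mul_mem_Tail {τ : WN} (hτ : τ ∈ Tail) : d ^ 3 * (c * τ) ∈ Tail := by
  obtain ⟨q, r, hr, rfl⟩ := hτ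
  exact ⟨q + 1, r, hr, by simp only [pow_succ', mul_assoc]⟩

/-- A superset of the words accepted from `s`, phrased through the part of `rep s` that a normal
form must still extend (`mem_shape_of_isSome_run`). -/
def shape : State → Set WN
  | .S0 => {w | ∃ p, w = d ^ p ∨ ∃ u ∈ UN * Tail, w = d ^ p * u}
  | .A => {w | c * w ∈ UN * Tail}
  | .B => {w | c * d * w ∈ UN * Tail}
  | .C => {w | d ^ 2 * w ∈ Tail}
  | .D => {w | d ^ 3 * w ∈ Tail}
  | .E => Tail
  | .F => {w | d * w ∈ Tail}

theorem mem_shape_of_isSome_run {s : State} {w : WN} (h : (run s w).isSome) : w ∈ shape s := by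
  induction w using FreeMonoid.recOn generalizing s with
  | one =>
    cases s <;> simp only [shape, Set.mem_ofPred_eq, mul_one]
    · exact ⟨0, .inl (pow_zero d).symm⟩
    · exact Set.mem_mul.2 ⟨c, c_mem_UN, 1, dpow_mem_Tail (r := 0) (by omega), mul_one c⟩
    · exact Set.mem_mul.2 ⟨c, c_mem_UN, d, by simpa using dpow_mem_Tail (r := 1) (by omega), rfl⟩
    · exact dpow_mem_Tail (by omega)
    · exact dpow_mem_Tail (by omega)
    · simpa using dpow_mem_Tail (r := 0) (by omega)
    · simpa using dpow_mem_Tail (r := 1) (by omega)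
  | of_mul x w ih =>
    cases s <;> cases x <;> simp only [run_of_mul, step, Option.bind_some, Option.bind_none,
      Option.isSome_none, Bool.false_eq_true] at h
    all_goals
      replace h := ih h
      simp only [shape, Set.mem_ofPred_eq, show FreeMonoid.of CD.c = c from rfl,
        show FreeMonoid.of CD.d = d from rfl] at h ⊢
    · exact ⟨0, .inr ⟨c * w, h, (one_mul _).symm⟩⟩
    · obtain ⟨p, rfl | ⟨u, hu, rfl⟩⟩ := h
      · exact ⟨p + 1, .inl (pow_succ' d p).symm⟩
      · exact ⟨p + 1, .inr ⟨u, hu, by rw [pow_succ', mul_assoc]⟩⟩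
    · obtain ⟨v, hv, τ, hτ, h⟩ := Set.mem_mul.1 h
      exact Set.mem_mul.2 ⟨c * v, c_mul_mem_UN hv, τ, hτ, by rw [mul_assoc, h]⟩
    · rwa [← mul_assoc]
    · obtain ⟨v, hv, τ, hτ, h⟩ := Set.mem_mul.1 h
      exact Set.mem_mul.2 ⟨c * d * v, c_mul_d_mul_mem_UN hv, τ, hτ, by rw [mul_assoc, h]⟩
    · rw [mul_assoc, ← mul_assoc d, ← sq]
      exact Set.mul_mem_mul c_mem_UN h
    · rwa [← mul_assoc, ← pow_succ]
    · exact d3c_mul_mem_Tail h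
    · exact h
    · rwa [← mul_assoc, ← sq]

theorem run_S0_dpow (p : ℕ) : run .S0 (d ^ p) = some .S0 := by
  induction p with
  | zero => rfl
  | succ p ih => rw [pow_succ', d, run_of_mul]; exact ih

theorem run_of_mem_UN {v : WN} (hv : v ∈ UN) :
    ∀ s, step s .c = some .A → run s v = some .A := by
  refine mem_UN_induction (P := fun v ↦ ∀ s, step s .c = some .A → run s v = some .A)
    (fun s hs ↦ ?_) (fun v ih s hs ↦ ?_) (fun v ih s hs ↦ ?_) hv
  · rw [c, run_of, hs]
  · rw [c, run_of_mul, hs, Option.bind_some]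
    exact ih .A rfl
  · rw [c, d, mul_assoc, run_of_mul, hs, Option.bind_some, run_of_mul]
    exact ih .B rfl

theorem run_E_d3c_pow (q : ℕ) : run .E ((d ^ 3 * c) ^ q) = some .E := by
  induction q with
  | zero => rfl
  | succ q ih =>
    rw [pow_succ', run_mul, show run .E (d ^ 3 * c) = some .E from rfl, Option.bind_some, ih]

theorem isSome_run_A_of_mem_Tail {τ : WN} (hτ : τ ∈ Tail) : (run .A τ).isSome := by
  obtain ⟨q, r, hr, rfl⟩ := hτ
  rcases q with _ | q
  · interval_cases r <;> rfl
  · rw [pow_succ', mul_assoc, run_mul, show run .A (d ^ 3 * c) = some .E from rfl,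
      Option.bind_some, run_mul, run_E_d3c_pow, Option.bind_some]
    interval_cases r <;> rfl

theorem isSome_run_S0_dpow_mul {u : WN} (hu : u ∈ UN * Tail) (p : ℕ) :
    (run .S0 (d ^ p * u)).isSome := by
  obtain ⟨v, hv, τ, hτ, rfl⟩ := Set.mem_mul.1 hu
  rw [run_mul, run_S0_dpow, Option.bind_some, run_mul, run_of_mem_UN hv .S0 rfl, Option.bind_some]
  exact isSome_run_A_of_mem_Tail hτ

theorem irred_rN_iff_isSome_run (w : WN) : Irred rN w ↔ (run .S0 w).isSome := by
  rw [irred_rN_iff, isSome_run_iff]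
  rfl

theorem c_not_mem_toList_dpow (p : ℕ) : CD.c ∉ (d ^ p).toList := by
  induction p with
  | zero => simp
  | succ p ih => simpa [pow_succ', d] using ih

theorem normalForm_iff (w : WN) :
    ((∃ p : ℕ, ∃ v ∈ UN, w = d ^ p * v) ∨
      (∃ p q r : ℕ, ∃ v ∈ UN, r ≤ 3 ∧ 0 < q + r ∧ w = d ^ p * v * (d ^ 3 * c) ^ q * d ^ r)) ↔
      ∃ p, ∃ u ∈ UN * Tail, w = d ^ p * u := by
  simp only [Set.mem_mul, Tail]
  constructor
  · rintro (⟨p, v, hv, rfl⟩ | ⟨p, q, r, v, hv, hr, -, rfl⟩)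
    · exact ⟨p, v, ⟨v, hv, 1, ⟨0, 0, by simp⟩, mul_one v⟩, rfl⟩
    · exact ⟨p, _, ⟨v, hv, _, ⟨q, r, hr, rfl⟩, rfl⟩, by simp only [mul_assoc]⟩
  · rintro ⟨p, _, ⟨v, hv, _, ⟨q, r, hr, rfl⟩, rfl⟩, rfl⟩
    rcases Nat.eq_zero_or_pos (q + r) with hqr | hqr
    · obtain ⟨rfl, rfl⟩ : q = 0 ∧ r = 0 := by omega
      exact .inl ⟨p, v, hv, by simp⟩
    · exact .inr ⟨p, q, r, v, hv, hr, hqr, by simp only [mul_assoc]⟩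

end RN

open RN in
/-- A word over `{c,d}` containing at least one `c` is irreducible for `R_N` iff it has the
form `d^p v` or `d^p v (d³c)^q d^r` with `v ∈ U_N`, `0 ≤ r ≤ 3`, `q + r > 0`. -/
theorem stmt7 (w : WN) (hc : CD.c ∈ FreeMonoid.toList w) :
    Irred rN w ↔
      ((∃ p : ℕ, ∃ v ∈ UN, w = d ^ p * v) ∨
        (∃ p q r : ℕ, ∃ v ∈ UN, r ≤ 3 ∧ 0 < q + r ∧
          w = d ^ p * v * (d ^ 3 * c) ^ q * d ^ r)) := by
  rw [irred_rN_iff_isSome_run, normalForm_iff]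
  constructor
  · intro h
    obtain ⟨p, rfl | hu⟩ := mem_shape_of_isSome_run h
    · exact absurd hc (c_not_mem_toList_dpow p)
    · exact ⟨p, hu⟩
  · rintro ⟨p, u, hu, rfl⟩
    exact isSome_run_S0_dpow_mul hu p
end

section
/- Every element of the monoid N = ⟨c, d | cdc = cd²c = cd⁴ = cd³c² = cd³cdc⟩ is represented by exactly one word in the set N_N = {d^p, d^p v, d^p v (d³c)^q d^r : v ∈ U_N, p, q ≥ 0, 0 ≤ r ≤ 3, q + r > 0}, where U_N = {c^{i₀} d c^{i₁} d ⋯ d c^{i_k} : k ≥ 0, all i_j ≥ 1}. -/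
open Relation

/-!
Words act on the right on the normal forms `NN`: appending a letter to a normal form and reducing
with the relations gives a normal form again, and this reduction is a deterministic function of
the normal form and the letter (an automaton reading left to right). The action respects the four
defining relations, so it factors through `N`. Started at the empty word, it sends a word to a
normal form congruent to it (existence), and it sends every normal form to itself, so two
congruent normal forms coincide (uniqueness).
-/

lemma List.intersperse_append_singleton_of_ne_nil {α : Type*} {l : List α} (hl : l ≠ [])
    (x sep : α) : (l ++ [x]).intersperse sep = l.intersperse sep ++ [sep, x] := by
  induction l with
  | nil => exact absurd rfl hl
  | cons y l ih =>
    rcases l with _ | ⟨z, l⟩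
    · rfl
    · simp only [List.cons_append] at ih ⊢
      rw [List.intersperse_cons_cons, ih (List.cons_ne_nil _ _)]
      rfl

lemma Con.rel_of_eq {M : Type*} [Mul M] (r : Con M) {x y : M} (h : x = y) : r x y :=
  h ▸ r.refl x

lemma conGen_of_rN {u v : WN} (h : rN u v) : conGen rN u v := ConGen.Rel.of u v h

lemma cd3_pow_mul_cdc (q : ℕ) : conGen rN ((c * d ^ 3) ^ q * (c * d * c)) (c * d * c) := by
  induction q with
  | zero => exact (conGen rN).rel_of_eq (one_mul _)
  | succ q ih =>
    rw [pow_succ, mul_assoc]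
    have absorb := conGen_of_rN ⟨.inr (.inr (.inr rfl)), rfl⟩
    exact ((conGen rN).mul ((conGen rN).refl _) absorb).trans ih

/-- `c (d³c)^q = (cd³)^q c`, and `cd³ · cdc = cdc` absorbs the factors `cd³` one at a time. -/
lemma c_mul_d3c_pow_mul {x : WN} (hx : conGen rN (c * x) (c * d * c)) (q : ℕ) :
    conGen rN (c * (d ^ 3 * c) ^ q * x) (c * d * c) := by
  rw [← mul_pow_mul, mul_assoc]
  exact ((conGen rN).mul ((conGen rN).refl _) hx).trans (cd3_pow_mul_cdc q)

lemma c_mul_d3c_pow_mul_d_pow_mul_c {q r : ℕ} (h : r = 1 ∨ r = 2 ∨ (r = 0 ∧ 0 < q)) :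
    conGen rN (c * (d ^ 3 * c) ^ q * d ^ r * c) (c * d * c) := by
  rcases h with rfl | rfl | ⟨rfl, hq⟩
  · rw [pow_one, mul_assoc]
    exact c_mul_d3c_pow_mul ((conGen rN).refl _) q
  · rw [mul_assoc]
    exact c_mul_d3c_pow_mul (by rw [← mul_assoc]; exact conGen_of_rN ⟨.inl rfl, rfl⟩) q
  · obtain ⟨q, rfl⟩ := Nat.exists_eq_add_one_of_ne_zero hq.ne'
    have h3 : conGen rN (c * (d ^ 3 * c * c)) (c * d * c) := by
      rw [← mul_assoc, ← mul_assoc, mul_assoc _ c, ← pow_two]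
      exact conGen_of_rN ⟨.inr (.inr (.inl rfl)), rfl⟩
    have split_last :
        c * (d ^ 3 * c) ^ (q + 1) * d ^ 0 * c = c * (d ^ 3 * c) ^ q * (d ^ 3 * c * c) := by
      simp [pow_succ, mul_assoc]
    rw [split_last]
    exact c_mul_d3c_pow_mul h3 q

lemma c_mul_d3c_pow_mul_d4 (q : ℕ) : conGen rN (c * (d ^ 3 * c) ^ q * d ^ 4) (c * d * c) :=
  c_mul_d3c_pow_mul (conGen_of_rN ⟨.inr (.inl rfl), rfl⟩) q

def blockWord (l : List ℕ) : WN := ((l.map (c ^ ·)).intersperse d).prod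

lemma mem_UN {v : WN} :
    v ∈ UN ↔ ∃ l, l ≠ [] ∧ (∀ i ∈ l, 1 ≤ i) ∧ v = blockWord l :=
  Iff.rfl

lemma blockWord_append_succ (m : List ℕ) (i : ℕ) :
    blockWord (m ++ [i + 1]) = blockWord (m ++ [i]) * c := by
  induction m with
  | nil => simp [blockWord, pow_succ]
  | cons j m ih =>
    rcases m with _ | ⟨k, m⟩
    · simp [blockWord, pow_succ, mul_assoc]
    · simp only [blockWord, List.cons_append, List.map_cons, List.intersperse_cons_cons,
        List.prod_cons] at ih ⊢
      rw [ih]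
      simp only [mul_assoc]

lemma blockWord_append_one {m : List ℕ} (hm : m ≠ []) :
    blockWord (m ++ [1]) = blockWord m * d * c := by
  rw [blockWord, List.map_append, List.map_singleton,
    List.intersperse_append_singleton_of_ne_nil (by simpa using hm)]
  simp [blockWord, mul_assoc]

lemma c_mem_UN : c ∈ UN := ⟨[1], by simp, by simp, by simp⟩

lemma mul_c_mem_UN {v : WN} (hv : v ∈ UN) : v * c ∈ UN := by
  obtain ⟨l, hl, hpos, rfl⟩ := mem_UN.1 hv
  obtain ⟨m, i, rfl⟩ : ∃ m i, l = m ++ [i] :=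
    ⟨l.dropLast, l.getLast hl, (List.dropLast_append_getLast hl).symm⟩
  refine ⟨m ++ [i + 1], by simp, ?_, (blockWord_append_succ m i).symm⟩
  simp only [List.mem_append, List.mem_singleton] at hpos ⊢
  rintro j (hj | rfl)
  exacts [hpos j (.inl hj), by omega]

lemma mul_d_mul_c_mem_UN {v : WN} (hv : v ∈ UN) : v * d * c ∈ UN := by
  obtain ⟨l, hl, hpos, rfl⟩ := mem_UN.1 hv
  refine ⟨l ++ [1], by simp, ?_, (blockWord_append_one hl).symm⟩
  simp only [List.mem_append, List.mem_singleton]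
  rintro j (hj | rfl)
  exacts [hpos j hj, le_rfl]

lemma UN.induction {P : WN → Prop} (hc : P c) (hmul_c : ∀ v ∈ UN, P v → P (v * c))
    (hmul_dc : ∀ v ∈ UN, P v → P (v * d * c)) {v : WN} (hv : v ∈ UN) : P v := by
  rw [mem_UN] at hv
  obtain ⟨l, hl, hpos, rfl⟩ := hv
  induction l using List.reverseRecOn with
  | nil => exact absurd rfl hl
  | append_singleton m i ih =>
    have hi : 1 ≤ i := hpos i (by simp)
    induction i, hi using Nat.le_induction with
    | base =>
      rcases eq_or_ne m [] with rfl | hm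
      · simpa [blockWord] using hc
      · rw [blockWord_append_one hm]
        have hpos' : ∀ j ∈ m, 1 ≤ j := fun j hj => hpos j (by simp [hj])
        exact hmul_dc _ ⟨m, hm, hpos', rfl⟩ (ih hm hpos')
    | succ i hi ih' =>
      have hpos' : ∀ j ∈ m ++ [i], 1 ≤ j := by
        simp only [List.mem_append, List.mem_singleton] at hpos ⊢
        rintro j (hj | rfl)
        exacts [hpos j (.inl hj), hi]
      rw [blockWord_append_succ]
      exact hmul_c _ ⟨_, by simp, hpos', rfl⟩ (ih' (by simp) hpos')

lemma exists_eq_mul_c_of_mem_UN {v : WN} (hv : v ∈ UN) : ∃ u, v = u * c :=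
  UN.induction (P := fun v => ∃ u, v = u * c) ⟨1, (one_mul c).symm⟩
    (fun v _ _ => ⟨v, rfl⟩) (fun v _ _ => ⟨v * d, rfl⟩) hv

/-- The normal forms of `NN` by their parameters: `dPow p` is `d^p`, `form p v q r` is
`d^p v (d³c)^q d^r`; `mulC` and `mulD` append a letter and reduce. -/
inductive NF
  | dPow (p : ℕ)
  | form (p : ℕ) (v : WN) (q r : ℕ)

namespace NF

def word : NF → WN
  | dPow p => d ^ p
  | form p v q r => d ^ p * v * (d ^ 3 * c) ^ q * d ^ r

def Valid : NF → Prop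
  | dPow _ => True
  | form _ v _ r => v ∈ UN ∧ r ≤ 3

def mulC : NF → NF
  | dPow p => form p c 0 0
  | form p v q r =>
    if r = 3 then form p v (q + 1) 0
    else if q = 0 ∧ r = 0 then form p (v * c) 0 0
    else form p (v * d * c) 0 0

def mulD : NF → NF
  | dPow p => dPow (p + 1)
  | form p v q r => if r = 3 then form p (v * d * c) 0 0 else form p v q (r + 1)

/-- The opposite monoid makes `act` read words from left to right. -/
def act : WN →* (Function.End NF)ᵐᵒᵖ :=
  FreeMonoid.lift fun
    | .c => .op mulC
    | .d => .op mulD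

def run (w : WN) (s : NF) : NF := (act w).unop s

@[simp] lemma run_c (s : NF) : run c s = mulC s := rfl
@[simp] lemma run_d (s : NF) : run d s = mulD s := rfl
@[simp] lemma run_mul (x y : WN) (s : NF) : run (x * y) s = run y (run x s) := by
  simp only [run, map_mul, MulOpposite.unop_mul]; rfl

lemma mulC_eq_form (s : NF) : ∃ p v q, mulC s = form p v q 0 := by
  rcases s with p | ⟨p, v, q, r⟩
  · exact ⟨p, c, 0, rfl⟩
  · simp only [mulC]
    split_ifs
    exacts [⟨p, v, q + 1, rfl⟩, ⟨p, v * c, 0, rfl⟩, ⟨p, v * d * c, 0, rfl⟩]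

/-- Each relator starts with `c`, after which the automaton is in a state `form p v q 0`. -/
lemma run_eq_of_rN {u v : WN} (h : rN u v) : run u = run v := by
  obtain ⟨hu, rfl⟩ := h
  funext s
  obtain ⟨p, v, q, hs⟩ := mulC_eq_form s
  rcases hu with rfl | rfl | rfl | rfl <;>
  · simp only [pow_succ, pow_zero, one_mul, run_mul, run_c, run_d, hs]
    simp [mulC, mulD]

lemma conGen_le_ker_act : conGen rN ≤ Con.ker act :=
  Con.conGen_le.2 fun _ _ h => (Con.ker_rel act).2 <| MulOpposite.unop_injective (run_eq_of_rN h)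

lemma run_eq_of_conGen {x y : WN} (h : conGen rN x y) : run x = run y :=
  congrArg MulOpposite.unop ((Con.ker_rel act).1 (conGen_le_ker_act h))

lemma Valid.mulC {s : NF} (h : s.Valid) : s.mulC.Valid := by
  rcases s with p | ⟨p, v, q, r⟩
  · exact ⟨c_mem_UN, Nat.zero_le 3⟩
  · obtain ⟨hv, hr⟩ := h
    simp only [NF.mulC]
    split_ifs
    exacts [⟨hv, by omega⟩, ⟨mul_c_mem_UN hv, by omega⟩,
      ⟨mul_d_mul_c_mem_UN hv, by omega⟩]

lemma Valid.mulD {s : NF} (h : s.Valid) : s.mulD.Valid := by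
  rcases s with p | ⟨p, v, q, r⟩
  · trivial
  · obtain ⟨hv, hr⟩ := h
    simp only [NF.mulD]
    split_ifs
    exacts [⟨mul_d_mul_c_mem_UN hv, by omega⟩, ⟨hv, by omega⟩]

lemma Valid.run {s : NF} (h : s.Valid) (w : WN) : (run w s).Valid := by
  induction w using FreeMonoid.inductionOn' generalizing s with
  | one => exact h
  | of_mul x w ih =>
    rw [run_mul]
    cases x
    exacts [ih h.mulC, ih h.mulD]

lemma word_mem_NN {s : NF} (h : s.Valid) : s.word ∈ NN := by
  rcases s with p | ⟨p, v, q, r⟩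
  · exact .inl ⟨p, rfl⟩
  · obtain ⟨hv, hr⟩ := h
    rcases Nat.eq_zero_or_pos (q + r) with hqr | hqr
    · exact .inr (.inl ⟨p, v, hv, by simp [word, show q = 0 by omega, show r = 0 by omega]⟩)
    · exact .inr (.inr ⟨p, q, r, v, hv, hr, hqr, rfl⟩)

lemma conGen_word_mul_c {s : NF} (h : s.Valid) : conGen rN (s.word * c) s.mulC.word := by
  rcases s with p | ⟨p, v, q, r⟩
  · exact (conGen rN).rel_of_eq (by simp [word, NF.mulC])
  · obtain ⟨hv, hr⟩ := h
    simp only [NF.mulC]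
    split_ifs with h3 h0
    · exact (conGen rN).rel_of_eq (by simp [word, h3, pow_succ, mul_assoc])
    · exact (conGen rN).rel_of_eq (by simp [word, h0.1, h0.2, mul_assoc])
    · obtain ⟨u, rfl⟩ := exists_eq_mul_c_of_mem_UN hv
      have key := c_mul_d3c_pow_mul_d_pow_mul_c (q := q) (r := r) (by omega)
      convert (conGen rN).mul ((conGen rN).refl (d ^ p * u)) key using 1 <;>
        simp [word, mul_assoc]

lemma conGen_word_mul_d {s : NF} (h : s.Valid) : conGen rN (s.word * d) s.mulD.word := by
  rcases s with p | ⟨p, v, q, r⟩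
  · exact (conGen rN).rel_of_eq (by simp [word, NF.mulD, pow_succ])
  · obtain ⟨hv, hr⟩ := h
    simp only [NF.mulD]
    split_ifs with h3
    · obtain ⟨u, rfl⟩ := exists_eq_mul_c_of_mem_UN hv
      convert (conGen rN).mul ((conGen rN).refl (d ^ p * u)) (c_mul_d3c_pow_mul_d4 q) using 1 <;>
        simp [word, h3, pow_succ, mul_assoc]
    · exact (conGen rN).rel_of_eq (by simp [word, pow_succ, mul_assoc])

lemma conGen_word_mul {s : NF} (h : s.Valid) (w : WN) : conGen rN (s.word * w) (run w s).word := by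
  induction w using FreeMonoid.inductionOn' generalizing s with
  | one => exact (conGen rN).rel_of_eq (mul_one _)
  | of_mul x w ih =>
    rw [run_mul, ← mul_assoc]
    cases x
    · exact ((conGen rN).mul (conGen_word_mul_c h) ((conGen rN).refl w)).trans (ih h.mulC)
    · exact ((conGen rN).mul (conGen_word_mul_d h) ((conGen rN).refl w)).trans (ih h.mulD)

lemma run_d_pow_dPow (p n : ℕ) : run (d ^ n) (dPow p) = dPow (p + n) := by
  induction n with
  | zero => rfl
  | succ n ih => rw [pow_succ, run_mul, ih]; rfl

lemma run_dPow_of_mem_UN {v : WN} (hv : v ∈ UN) (p : ℕ) : run v (dPow p) = form p v 0 0 :=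
  UN.induction (P := fun v => run v (dPow p) = form p v 0 0) rfl
    (fun _ _ ih => by simp [ih, NF.mulC]) (fun _ _ ih => by simp [ih, NF.mulC, NF.mulD]) hv

lemma run_d3c_pow (p : ℕ) (v : WN) (q : ℕ) :
    run ((d ^ 3 * c) ^ q) (form p v 0 0) = form p v q 0 := by
  induction q with
  | zero => rfl
  | succ q ih =>
    rw [pow_succ, run_mul, ih]
    simp [pow_succ, NF.mulC, NF.mulD]

lemma run_d_pow_form (p : ℕ) (v : WN) (q : ℕ) {r : ℕ} (hr : r ≤ 3) :
    run (d ^ r) (form p v q 0) = form p v q r := by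
  induction r with
  | zero => rfl
  | succ r ih => rw [pow_succ, run_mul, ih (by omega), run_d, NF.mulD, if_neg (by omega)]

lemma word_run_of_mem_NN {w : WN} (hw : w ∈ NN) : (run w (dPow 0)).word = w := by
  rcases hw with ⟨p, rfl⟩ | ⟨p, v, hv, rfl⟩ | ⟨p, q, r, v, hv, hr, -, rfl⟩
  · simp [run_d_pow_dPow, word]
  · simp [run_d_pow_dPow, run_dPow_of_mem_UN hv, word]
  · simp [run_d_pow_dPow, run_dPow_of_mem_UN hv, run_d3c_pow, run_d_pow_form _ _ _ hr, word]

end NF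

/-- Every element of `N` is represented by exactly one word in `N_N`. -/
theorem stmt9 (x : (conGen rN).Quotient) :
    ∃! w : WN, w ∈ NN ∧ (conGen rN).mk' w = x := by
  induction x using Con.induction_on with
  | _ w =>
    have hw : conGen rN w (NF.run w (.dPow 0)).word := by
      simpa [NF.word] using NF.conGen_word_mul (s := .dPow 0) trivial w
    have hvalid : (NF.run w (.dPow 0)).Valid := NF.Valid.run (s := .dPow 0) trivial w
    refine ⟨_, ⟨NF.word_mem_NN hvalid, (Con.eq _).2 hw.symm⟩, ?_⟩
    rintro w' ⟨hw', hw'w⟩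
    rw [← NF.word_run_of_mem_NN hw', NF.run_eq_of_conGen ((Con.eq _).1 hw'w)]
end

section
/- Let M = ⟨a,b | ab^n a = aba (n ≥ 2)⟩ and N = ⟨c,d | cdc = cd²c = cd⁴ = cd³c² = cd³cdc⟩. There is a bijection f : M → N such that for all x, y ∈ M: there exists g ∈ {a,b} with y = x·g (in M) if and only if there exists h ∈ {c,d} with f(y) = f(x)·h (in N); that is, the unlabelled directed right Cayley graphs Cay(M,{a,b}) and Cay(N,{c,d}) are isomorphic. -/
open Relation

/-!
Both monoids have normal forms indexed by the same set `ℕ ⊕ ℕ × WM × ℕ`. In `M`, `.inl s` is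
`b^s` and `.inr (s, v, t)` is `b^s · u · b^t`, where `u = block v` ranges over the words
`a^{i₀} b a^{i₁} ⋯ b a^{i_k}` with all `i_j ≥ 1`; in `N` they are `d^s` and
`d^s · ū · (d³c)^⌊t/4⌋ d^(t mod 4)`, with `ū` the image of `u` under `a ↦ c, b ↦ d`.
Right multiplication by a generator either lengthens the tail (`t ↦ t + 1`) or folds it into the
block, which the relations allow because `u b^t a = u b a` in `M`, and in `N` every folded tail
reduces to `ū d c` through `cd²c = cd⁴ = cd³c² = cd³cdc = cdc`. The two transition systems on the
common index set therefore coincide, except that for `t ≡ 3 mod 4` the letters `c` and `d` exchange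
their roles; as unlabelled graphs they are equal, and each is the Cayley graph of its monoid.
-/

namespace FreeMonoid

theorem induction_on_mul_of {α : Type*} {motive : FreeMonoid α → Prop}
    (w : FreeMonoid α) (one : motive 1) (mul_of : ∀ w x, motive w → motive (w * .of x)) :
    motive w :=
  List.reverseRecOn (motive := fun l => motive (.ofList l)) w.toList one
    fun l x h => mul_of (.ofList l) x h

section WordAction

variable {α β : Type*}

def wordAct (act : β → α → β) : FreeMonoid α →* (Function.End β)ᵐᵒᵖ :=
  FreeMonoid.lift fun g => .op fun x => act x g

def run (act : β → α → β) (x : β) (w : FreeMonoid α) : β := (wordAct act w).unop x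

variable {act : β → α → β}

@[simp] theorem run_one (x : β) : run act x 1 = x := rfl

@[simp] theorem run_of (x : β) (g : α) : run act x (.of g) = act x g := rfl

@[simp] theorem run_mul (x : β) (u v : FreeMonoid α) :
    run act x (u * v) = run act (run act x u) v := by
  rw [run, run, run, map_mul]; rfl

theorem wordAct_eq_iff {u v : FreeMonoid α} :
    wordAct act u = wordAct act v ↔ ∀ x, run act x u = run act x v :=
  ⟨fun h x => congrFun (congrArg MulOpposite.unop h) x,
    fun h => MulOpposite.unop_injective (funext h)⟩

end WordAction

end FreeMonoid

open FreeMonoid (wordAct run run_mul run_of wordAct_eq_iff)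

structure NormalFormModel {α : Type*} (r : FreeMonoid α → FreeMonoid α → Prop) (β : Type*)
    where
  act : β → α → β
  base : β
  nf : β → FreeMonoid α
  wordAct_eq_of_rel : ∀ u v, r u v → wordAct act u = wordAct act v
  nf_base : (nf base : (conGen r).Quotient) = 1
  nf_act : ∀ x g, (nf (act x g) : (conGen r).Quotient) = nf x * (FreeMonoid.of g : FreeMonoid α)
  run_nf : ∀ x, run act base (nf x) = x

namespace NormalFormModel

variable {α β : Type*} {r : FreeMonoid α → FreeMonoid α → Prop} (S : NormalFormModel r β)

def eval : (conGen r).Quotient →* (Function.End β)ᵐᵒᵖ :=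
  (conGen r).lift (wordAct S.act) <|
    Con.conGen_le.2 fun u v h => (Con.ker_rel _).2 (S.wordAct_eq_of_rel u v h)

theorem nf_run (x : β) (w : FreeMonoid α) :
    (S.nf (run S.act x w) : (conGen r).Quotient) = S.nf x * w := by
  induction w using FreeMonoid.induction_on_mul_of with
  | one => simp
  | mul_of w g ih => rw [run_mul, run_of, S.nf_act, ih, Con.coe_mul, mul_assoc]

def equiv : (conGen r).Quotient ≃ β where
  toFun q := (S.eval q).unop S.base
  invFun x := S.nf x
  left_inv q := Con.induction_on q fun w => by
    simp only [eval, Con.lift_coe]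
    rw [← run, S.nf_run, S.nf_base, one_mul]
  right_inv x := by simp only [eval, Con.lift_coe]; exact S.run_nf x

theorem equiv_coe (w : FreeMonoid α) : S.equiv w = run S.act S.base w := rfl

theorem equiv_mul_of (q : (conGen r).Quotient) (g : α) :
    S.equiv (q * (FreeMonoid.of g : FreeMonoid α)) = S.act (S.equiv q) g :=
  Con.induction_on q fun w => by rw [← Con.coe_mul, equiv_coe, equiv_coe, run_mul, run_of]

theorem eq_mul_of_iff (x y : (conGen r).Quotient) (g : α) :
    y = x * (FreeMonoid.of g : FreeMonoid α) ↔ S.equiv y = S.act (S.equiv x) g := by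
  rw [← S.equiv_mul_of, S.equiv.apply_eq_iff_eq]

end NormalFormModel

namespace CayleyMN

abbrev State := ℕ ⊕ ℕ × WM × ℕ

def actM : State → AB → State
  | .inl s, .a => .inr (s, 1, 0)
  | .inl s, .b => .inl (s + 1)
  | .inr (s, v, t), .a => .inr (s, v * .of (if t = 0 then .a else .b), 0)
  | .inr (s, v, t), .b => .inr (s, v, t + 1)

def relabel : State → CD → AB
  | .inl _, .c => .a
  | .inl _, .d => .b
  | .inr (_, _, t), .c => if t % 4 = 3 then .b else .a
  | .inr (_, _, t), .d => if t % 4 = 3 then .a else .b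

def actN (x : State) (h : CD) : State := actM x (relabel x h)

theorem relabel_c_d (x : State) :
    relabel x .c = .a ∧ relabel x .d = .b ∨ relabel x .c = .b ∧ relabel x .d = .a := by
  rcases x with _ | ⟨_, _, t⟩
  · exact .inl ⟨rfl, rfl⟩
  · by_cases ht : t % 4 = 3 <;> simp [relabel, ht]

theorem actM_edge_iff_actN_edge (x z : State) :
    (z = actM x .a ∨ z = actM x .b) ↔ (z = actN x .c ∨ z = actN x .d) := by
  rcases relabel_c_d x with ⟨hc, hd⟩ | ⟨hc, hd⟩ <;> simp [actN, hc, hd, or_comm]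

theorem actN_inr_c (p : ℕ) (v : WM) (t : ℕ) :
    actN (.inr (p, v, t)) .c =
      if t % 4 = 3 then .inr (p, v, t + 1) else actM (.inr (p, v, t)) .a := by
  by_cases ht : t % 4 = 3 <;> simp [actN, relabel, actM, ht]

theorem actN_inr_d (p : ℕ) (v : WM) (t : ℕ) :
    actN (.inr (p, v, t)) .d =
      if t % 4 = 3 then actM (.inr (p, v, t)) .a else .inr (p, v, t + 1) := by
  by_cases ht : t % 4 = 3 <;> simp [actN, relabel, actM, ht]

theorem of_a : FreeMonoid.of AB.a = a := rfl

theorem of_b : FreeMonoid.of AB.b = b := rfl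

theorem of_c : FreeMonoid.of CD.c = c := rfl

theorem of_d : FreeMonoid.of CD.d = d := rfl

def pre : WM →* WM := FreeMonoid.lift fun | .a => a | .b => a * b

def block (v : WM) : WM := pre v * a

theorem pre_a : pre a = a := rfl

theorem pre_b : pre b = a * b := rfl

theorem block_mul_a (v : WM) : block (v * a) = block v * a := by
  rw [block, block, map_mul, pre_a]

theorem block_mul_b (v : WM) : block (v * b) = block v * b * a := by
  simp only [block, map_mul, pre_b, mul_assoc]

def nfM : State → WM
  | .inl s => b ^ s
  | .inr (s, v, t) => b ^ s * block v * b ^ t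

def tailN (t : ℕ) : WN := (d ^ 3 * c) ^ (t / 4) * d ^ (t % 4)

def nfN : State → WN
  | .inl p => d ^ p
  | .inr (p, v, t) => d ^ p * bar (block v) * tailN t

section MonoidM

abbrev QM := (conGen rM).Quotient

theorem run_actM_inl_b_pow (s n : ℕ) : run actM (.inl s) (b ^ n) = .inl (s + n) := by
  induction n with
  | zero => rfl
  | succ n ih => rw [pow_succ, run_mul, ih]; rfl

theorem run_actM_inr_b_pow (s : ℕ) (v : WM) (t n : ℕ) :
    run actM (.inr (s, v, t)) (b ^ n) = .inr (s, v, t + n) := by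
  induction n with
  | zero => rfl
  | succ n ih => rw [pow_succ, run_mul, ih]; rfl

theorem run_actM_block (s : ℕ) (v : WM) : run actM (.inl s) (block v) = .inr (s, v, 0) := by
  induction v using FreeMonoid.induction_on_mul_of with
  | one => rfl
  | mul_of v g ih =>
    cases g
    · rw [of_a, block_mul_a, run_mul, ih]; rfl
    · rw [of_b, block_mul_b, run_mul, run_mul, ih]; rfl

theorem run_actM_nfM (x : State) : run actM (.inl 0) (nfM x) = x := by
  rcases x with s | ⟨s, v, t⟩
  · simp [nfM, run_actM_inl_b_pow]
  · simp [nfM, run_actM_inl_b_pow, run_actM_block, run_actM_inr_b_pow]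

theorem mkM_block_mul_b_pow_mul_a (X v : WM) {n : ℕ} (hn : n ≠ 0) :
    ((X * block v * b ^ n * a : WM) : QM) = (X * block v * b * a : WM) := by
  rcases Nat.lt_or_ge n 2 with h | h
  · obtain rfl : n = 1 := by omega
    rw [pow_one]
  · rw [(conGen rM).eq]
    simpa only [block, mul_assoc] using
      (conGen rM).mul ((conGen rM).refl (X * pre v)) (ConGen.Rel.of _ _ ⟨n, h, rfl, rfl⟩)

theorem nfM_actM (x : State) (g : AB) :
    (nfM (actM x g) : QM) = (nfM x * .of g : WM) := by
  rcases x with s | ⟨s, v, t⟩ <;> cases g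
  · exact congrArg _ (by simp [nfM, actM, block, of_a])
  · exact congrArg _ (by simp [nfM, actM, pow_succ, of_b])
  · rcases Nat.eq_zero_or_pos t with rfl | ht
    · exact congrArg _ (by simp [nfM, actM, of_a, block_mul_a, mul_assoc])
    · simp only [nfM, actM, ht.ne', if_false, of_a, of_b, block_mul_b, pow_zero, mul_one]
      rw [mkM_block_mul_b_pow_mul_a _ _ ht.ne', ← mul_assoc, ← mul_assoc]
  · exact congrArg _ (by simp [nfM, actM, pow_succ, mul_assoc, of_b])

theorem exists_actM_a_eq (x : State) : ∃ s v, actM x .a = .inr (s, v, 0) := by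
  rcases x with s | ⟨s, v, t⟩
  · exact ⟨s, 1, rfl⟩
  · exact ⟨s, _, rfl⟩

theorem wordAct_actM_eq_of_rM {u w : WM} (h : rM u w) : wordAct actM u = wordAct actM w := by
  obtain ⟨n, hn, rfl, rfl⟩ := h
  refine wordAct_eq_iff.2 fun x => ?_
  obtain ⟨s, v, hx⟩ := exists_actM_a_eq x
  have hrun : run actM x a = .inr (s, v, 0) := hx
  rw [run_mul, run_mul, run_mul, run_mul, hrun, run_actM_inr_b_pow]
  change actM (.inr (s, v, 0 + n)) .a = actM (actM (.inr (s, v, 0)) .b) .a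
  simp [actM, show n ≠ 0 by omega]

def modelM : NormalFormModel rM State where
  act := actM
  base := .inl 0
  nf := nfM
  wordAct_eq_of_rel _ _ := wordAct_actM_eq_of_rM
  nf_base := by rw [nfM, pow_zero]; rfl
  nf_act := nfM_actM
  run_nf := run_actM_nfM

end MonoidM

section MonoidN

abbrev QN := (conGen rN).Quotient

theorem bar_block (v : WM) : bar (block v) = bar (pre v) * c := by
  rw [block, map_mul]; rfl

theorem bar_block_mul_a (v : WM) : bar (block (v * a)) = bar (block v) * c := by
  rw [block_mul_a, map_mul]; rfl

theorem bar_block_mul_b (v : WM) : bar (block (v * b)) = bar (block v) * d * c := by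
  rw [block_mul_b, map_mul, map_mul]; rfl

theorem tailN_zero : tailN 0 = 1 := by simp [tailN]

theorem tailN_succ (t : ℕ) : tailN (t + 1) = tailN t * if t % 4 = 3 then c else d := by
  by_cases ht : t % 4 = 3
  · rw [tailN, tailN, if_pos ht, ht, show (t + 1) / 4 = t / 4 + 1 by omega,
      show (t + 1) % 4 = 0 by omega, pow_succ, pow_zero, mul_one, mul_assoc]
  · rw [tailN, tailN, if_neg ht, show (t + 1) / 4 = t / 4 by omega,
      show (t + 1) % 4 = t % 4 + 1 by omega, pow_succ d (t % 4), mul_assoc]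

theorem run_actN_inl_d_pow (p n : ℕ) : run actN (.inl p) (d ^ n) = .inl (p + n) := by
  induction n with
  | zero => rfl
  | succ n ih => rw [pow_succ, run_mul, ih]; rfl

theorem run_actN_tailN (p : ℕ) (v : WM) (t : ℕ) :
    run actN (.inr (p, v, 0)) (tailN t) = .inr (p, v, t) := by
  induction t with
  | zero => rw [tailN_zero]; rfl
  | succ t ih =>
    rw [tailN_succ, run_mul, ih]
    by_cases ht : t % 4 = 3
    · rw [if_pos ht, ← of_c, run_of, actN_inr_c, if_pos ht]
    · rw [if_neg ht, ← of_d, run_of, actN_inr_d, if_neg ht]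

theorem run_actN_bar_block (p : ℕ) (v : WM) :
    run actN (.inl p) (bar (block v)) = .inr (p, v, 0) := by
  induction v using FreeMonoid.induction_on_mul_of with
  | one => rfl
  | mul_of v g ih =>
    cases g
    · rw [of_a, bar_block_mul_a, run_mul, ih]; rfl
    · rw [of_b, bar_block_mul_b, run_mul, run_mul, ih]; rfl

theorem run_actN_nfN (x : State) : run actN (.inl 0) (nfN x) = x := by
  rcases x with p | ⟨p, v, t⟩
  · simp [nfN, run_actN_inl_d_pow]
  · simp [nfN, run_actN_inl_d_pow, run_actN_bar_block, run_actN_tailN]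

theorem mkN_mul_of_rN (X : WN) {u w : WN} (h : rN u w) : ((X * u : WN) : QN) = (X * w : WN) :=
  (conGen rN).eq.2 ((conGen rN).mul ((conGen rN).refl X) (ConGen.Rel.of _ _ h))

theorem mkN_mul_cd3_pow_mul_cdc (X : WN) (q : ℕ) :
    ((X * (c * d ^ 3) ^ q * (c * d * c) : WN) : QN) = (X * (c * d * c) : WN) := by
  induction q with
  | zero => rw [pow_zero, mul_one]
  | succ q ih =>
    rw [pow_succ, mul_assoc X, mul_assoc _ (c * d ^ 3), ← mul_assoc X,
      mkN_mul_of_rN _ ⟨.inr (.inr (.inr rfl)), rfl⟩, ih]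

theorem mkN_tailN_mul_exit (X : WN) {t : ℕ} (ht : t ≠ 0) :
    ((X * c * tailN t * (if t % 4 = 3 then d else c) : WN) : QN) = (X * (c * d * c) : WN) := by
  have collapse : ∀ {u}, rN u (c * d * c) → ∀ q,
      ((X * (c * d ^ 3) ^ q * u : WN) : QN) = (X * (c * d * c) : WN) := fun hu q => by
    rw [mkN_mul_of_rN _ hu, mkN_mul_cd3_pow_mul_cdc]
  have hX : X * c * tailN t = X * (c * d ^ 3) ^ (t / 4) * c * d ^ (t % 4) := by
    rw [tailN, mul_assoc X, ← mul_assoc c, ← mul_pow_mul]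
    simp only [mul_assoc]
  obtain ⟨q, r, hr, rfl⟩ : ∃ q r, r < 4 ∧ t = 4 * q + r :=
    ⟨t / 4, t % 4, by omega, by omega⟩
  rw [hX, show (4 * q + r) / 4 = q by omega, show (4 * q + r) % 4 = r by omega]
  interval_cases r
  · obtain ⟨q, rfl⟩ : ∃ q', q = q' + 1 := ⟨q - 1, by omega⟩
    refine (congrArg _ ?_).trans (collapse ⟨.inr (.inr (.inl rfl)), rfl⟩ q)
    simp [pow_succ, mul_assoc]
  · refine (congrArg _ ?_).trans (mkN_mul_cd3_pow_mul_cdc X q)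
    simp [mul_assoc]
  · refine (congrArg _ ?_).trans (collapse ⟨.inl rfl, rfl⟩ q)
    simp [mul_assoc]
  · refine (congrArg _ ?_).trans (collapse ⟨.inr (.inl rfl), rfl⟩ q)
    simp [pow_succ, mul_assoc]

theorem nfN_inr_succ (p : ℕ) (v : WM) (t : ℕ) :
    nfN (.inr (p, v, t + 1)) = nfN (.inr (p, v, t)) * if t % 4 = 3 then c else d := by
  simp only [nfN, tailN_succ, mul_assoc]

theorem nfN_actM_inr_a (p : ℕ) (v : WM) (t : ℕ) :
    (nfN (actM (.inr (p, v, t)) .a) : QN) =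
      (nfN (.inr (p, v, t)) * if t % 4 = 3 then d else c : WN) := by
  rcases Nat.eq_zero_or_pos t with rfl | ht
  · exact congrArg _ (by simp [nfN, actM, of_a, bar_block_mul_a, tailN_zero, mul_assoc])
  · simp only [nfN, actM, if_neg ht.ne', of_b]
    rw [bar_block_mul_b, tailN_zero, mul_one, bar_block]
    convert (mkN_tailN_mul_exit (d ^ p * bar (pre v)) ht.ne').symm using 2 <;>
      simp only [mul_assoc]

theorem nfN_actN (x : State) (h : CD) : (nfN (actN x h) : QN) = (nfN x * .of h : WN) := by
  rcases x with p | ⟨p, v, t⟩ <;> cases h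
  · exact congrArg _ (by simp [nfN, actN, relabel, actM, bar_block, tailN_zero, of_c])
  · exact congrArg _ (by simp [nfN, actN, relabel, actM, pow_succ, of_d])
  · rw [actN_inr_c]
    split_ifs with ht
    · rw [nfN_inr_succ, if_pos ht, of_c]
    · rw [nfN_actM_inr_a, if_neg ht, of_c]
  · rw [actN_inr_d]
    split_ifs with ht
    · rw [nfN_actM_inr_a, if_pos ht, of_d]
    · rw [nfN_inr_succ, if_neg ht, of_d]

theorem exists_actN_c_eq (x : State) : ∃ p v k, actN x .c = .inr (p, v, 4 * k) := by
  rcases x with p | ⟨p, v, t⟩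
  · exact ⟨p, 1, 0, rfl⟩
  · rw [actN_inr_c]
    split_ifs with ht
    · exact ⟨p, v, (t + 1) / 4, by rw [Nat.mul_div_cancel' (by omega)]⟩
    · exact ⟨p, _, 0, rfl⟩

theorem wordAct_actN_eq_of_rN {u w : WN} (h : rN u w) : wordAct actN u = wordAct actN w := by
  obtain ⟨hu, rfl⟩ := h
  refine wordAct_eq_iff.2 fun x => ?_
  obtain ⟨p, v, k, hx⟩ := exists_actN_c_eq x
  have run_c : ∀ y, run actN y c = actN y .c := fun _ => rfl
  have run_d : ∀ y, run actN y d = actN y .d := fun _ => rfl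
  rcases hu with rfl | rfl | rfl | rfl <;>
    simp [run_mul, run_c, run_d, hx, pow_succ, actN_inr_c, actN_inr_d, actM, Nat.add_mod]

def modelN : NormalFormModel rN State where
  act := actN
  base := .inl 0
  nf := nfN
  wordAct_eq_of_rel _ _ := wordAct_actN_eq_of_rN
  nf_base := by rw [nfN, pow_zero]; rfl
  nf_act := nfN_actN
  run_nf := run_actN_nfN

end MonoidN

end CayleyMN

open CayleyMN

/-- The unlabelled directed right Cayley graphs of `M` and `N` are isomorphic: there is a
bijection `f : M → N` with `(x, y)` an edge iff `(f x, f y)` is. -/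
theorem stmt14 :
    ∃ f : (conGen rM).Quotient ≃ (conGen rN).Quotient,
      ∀ x y : (conGen rM).Quotient,
        (∃ g, (g = (conGen rM).mk' a ∨ g = (conGen rM).mk' b) ∧ y = x * g) ↔
        (∃ h, (h = (conGen rN).mk' c ∨ h = (conGen rN).mk' d) ∧ f y = f x * h) := by
  set f := modelM.equiv.trans modelN.equiv.symm
  have hf : ∀ q, modelN.equiv (f q) = modelM.equiv q := fun q => modelN.equiv.apply_symm_apply _
  refine ⟨f, fun x y => ?_⟩
  calc (∃ g, (g = (conGen rM).mk' a ∨ g = (conGen rM).mk' b) ∧ y = x * g)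
      ↔ y = x * (conGen rM).mk' a ∨ y = x * (conGen rM).mk' b := by
        simp only [exists_eq_or_imp, exists_eq_left]
    _ ↔ modelM.equiv y = actM (modelM.equiv x) .a ∨ modelM.equiv y = actM (modelM.equiv x) .b :=
        or_congr (modelM.eq_mul_of_iff x y .a) (modelM.eq_mul_of_iff x y .b)
    _ ↔ modelN.equiv (f y) = actN (modelN.equiv (f x)) .c ∨
          modelN.equiv (f y) = actN (modelN.equiv (f x)) .d := by
        rw [hf, hf]; exact actM_edge_iff_actN_edge _ _
    _ ↔ f y = f x * (conGen rN).mk' c ∨ f y = f x * (conGen rN).mk' d :=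
        (or_congr (modelN.eq_mul_of_iff _ _ .c) (modelN.eq_mul_of_iff _ _ .d)).symm
    _ ↔ _ := by simp only [exists_eq_or_imp, exists_eq_left]
end

section
/- In the monoid M = ⟨a, b | ab^n a = aba (n ≥ 2)⟩, the elements aba and ab^m a are equal for every m ≥ 1, but the elements ab^m (m ≥ 1) are pairwise distinct. -/
open Relation

/-- Reading a word left to right (hence the opposite monoid), `a` resets a counter to `0` and
`b` increments it; the final value is the length of the run of `b`s after the last `a`, which
the relations `a b^n a = a b a` cannot change since both sides end in `a`. -/
def trailingB : WM →* (Function.End ℕ)ᵐᵒᵖ :=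
  FreeMonoid.lift fun
    | AB.a => MulOpposite.op fun _ => 0
    | AB.b => MulOpposite.op Nat.succ

lemma trailingB_mul_a (w : WM) : trailingB (w * a) = trailingB a := by
  rw [map_mul]
  rfl

lemma trailingB_a_mul_b_pow (m n : ℕ) : (trailingB (a * b ^ m)).unop n = m := by
  induction m with
  | zero => rfl
  | succ m ih =>
    rw [pow_succ, ← mul_assoc, map_mul, MulOpposite.unop_mul]
    exact congrArg Nat.succ ih

lemma conGen_rM_le_ker_trailingB : conGen rM ≤ Con.ker trailingB :=
  Con.conGen_le.mpr fun _ _ ⟨_, _, hx, hy⟩ => by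
    show trailingB _ = trailingB _
    rw [hx, hy, trailingB_mul_a, trailingB_mul_a]

/-- In `M`, `a b^m a = a b a` for all `m ≥ 1`, but the elements `a b^m` (`m ≥ 1`) are
pairwise distinct. -/
theorem stmt16 :
    (∀ m : ℕ, 1 ≤ m → (conGen rM).mk' (a * b ^ m * a) = (conGen rM).mk' (a * b * a)) ∧
    (∀ m₁ m₂ : ℕ, 1 ≤ m₁ → 1 ≤ m₂ →
      (conGen rM).mk' (a * b ^ m₁) = (conGen rM).mk' (a * b ^ m₂) → m₁ = m₂) := by
  refine ⟨fun m hm => ?_, fun m₁ m₂ _ _ h => ?_⟩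
  · obtain rfl | hm := hm.eq_or_lt
    · rw [pow_one]
    · exact (Con.eq _).mpr (ConGen.Rel.of _ _ ⟨m, hm, rfl, rfl⟩)
  · have h' := conGen_rM_le_ker_trailingB ((Con.eq _).mp h)
    rw [← trailingB_a_mul_b_pow m₁ 0, ← trailingB_a_mul_b_pow m₂ 0]
    exact congrArg (fun f => f.unop 0) h'
end

section
/- The left Cayley graphs of M = ⟨a,b | ab^n a = aba (n ≥ 2)⟩ and N = ⟨c,d | cdc = cd²c = cd⁴ = cd³c² = cd³cdc⟩ with respect to the given generating sets are not isomorphic as unlabelled directed graphs. -/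
/-!
A graph isomorphism maps the in-neighbours of a vertex bijectively onto the in-neighbours of its
image, so it suffices to find a vertex of infinite in-degree in `M` while all in-degrees in `N` are
finite. In `M`, every `bⁿa` with `n ≥ 2` is an in-neighbour of `aba` (along `a`), and these are
pairwise distinct, as an action of `M` on `ℕ` separates them. In `N`, the action of the free monoid
on words with `c` acting by a normal-form rewrite and `d` by prepending respects the relations, so it
defines a normal form `nf x` from which `x` is recovered; since `nf (c x)` is at least about half as
long as `nf x`, each vertex has only finitely many in-neighbours.
-/

open Relation

section InNeighbours

variable {S T : Type*} [Mul S] [Mul T]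

def inNeighbours (A : Set S) (y : S) : Set S := {x | ∃ g ∈ A, y = g * x}

theorem image_inNeighbours {A : Set S} {B : Set T} (f : S ≃ T)
    (hf : ∀ x y, (∃ g ∈ A, y = g * x) ↔ (∃ h ∈ B, f y = h * f x)) (y : S) :
    f '' inNeighbours A y = inNeighbours B (f y) := by
  ext z
  rw [← f.apply_symm_apply z, f.injective.mem_set_image]
  exact hf _ y

end InNeighbours

namespace MonoidM

def act : WM →* Function.End ℕ :=
  FreeMonoid.lift fun
    | .a => ((fun m => if m = 0 then 1 else 0 : ℕ → ℕ) : Function.End ℕ)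
    | .b => (Nat.succ : Function.End ℕ)

theorem act_mul (u v : WM) (m : ℕ) : act (u * v) m = act u (act v m) := by
  rw [map_mul]; rfl

theorem act_a (m : ℕ) : act a m = if m = 0 then 1 else 0 := rfl

theorem act_b (m : ℕ) : act b m = m + 1 := rfl

theorem act_b_pow (n m : ℕ) : act (b ^ n) m = m + n := by
  induction n generalizing m with
  | zero => rfl
  | succ k ih => rw [pow_succ, act_mul, ih, act_b]; omega

-- Both sides of every relation `a b^n a = a b a` act as the constant map `0`.
theorem conGen_le_ker_act : conGen rM ≤ Con.ker act := by
  refine Con.conGen_le.mpr ?_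
  rintro _ _ ⟨n, hn, rfl, rfl⟩
  show act _ = act _
  funext m
  simp only [act_mul, act_a, act_b_pow, act_b]
  split_ifs <;> omega

theorem injective_mk_b_pow_mul_a : Function.Injective fun n : ℕ => (conGen rM).mk' (b ^ n * a) := by
  intro m n h
  have h0 := congrArg (fun z => (conGen rM).lift act conGen_le_ker_act z 0) h
  simp only [Con.lift_mk', act_mul, act_a, act_b_pow, if_pos] at h0
  omega

theorem mk_b_pow_mul_a_mem_inNeighbours {n : ℕ} (hn : 2 ≤ n) :
    (conGen rM).mk' (b ^ n * a) ∈ inNeighbours {(conGen rM).mk' a, (conGen rM).mk' b}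
      ((conGen rM).mk' (a * b * a)) := by
  refine ⟨_, Or.inl rfl, ?_⟩
  rw [← map_mul, ← mul_assoc]
  exact ((Con.eq _).mpr (ConGen.Rel.of _ _ ⟨n, hn, rfl, rfl⟩)).symm

theorem inNeighbours_aba_infinite :
    (inNeighbours {(conGen rM).mk' a, (conGen rM).mk' b} ((conGen rM).mk' (a * b * a))).Infinite :=
  Set.infinite_of_injective_forall_mem (injective_mk_b_pow_mul_a.comp (add_left_injective 2))
    fun n => mk_b_pow_mul_a_mem_inNeighbours (Nat.le_add_left 2 n)

end MonoidM

namespace MonoidN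

instance : Finite CD :=
  Finite.of_surjective (fun x : Bool => if x then CD.c else CD.d) (by rintro (_ | _) <;> simp)

-- A normal form of `c t`, obtained with the relations `cd²c = cd⁴ = cd³c² = cd³cdc = cdc`.
def mulC : List CD → List CD
  | [] => [.c]
  | .c :: t => .c :: .c :: t
  | [.d] => [.c, .d]
  | .d :: .c :: t => .c :: .d :: .c :: t
  | [.d, .d] => [.c, .d, .d]
  | .d :: .d :: .c :: t => .c :: .d :: .c :: t
  | [.d, .d, .d] => [.c, .d, .d, .d]
  | [.d, .d, .d, .c] => [.c, .d, .d, .d, .c]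
  | .d :: .d :: .d :: .c :: .c :: t => .c :: .d :: .c :: t
  | [.d, .d, .d, .c, .d] => [.c, .d, .d, .d, .c, .d]
  | .d :: .d :: .d :: .c :: .d :: .c :: t => .c :: .d :: .c :: t
  | .d :: .d :: .d :: .c :: .d :: .d :: t => .c :: .d :: .d :: .d :: .c :: .d :: .d :: t
  | .d :: .d :: .d :: .d :: t => .c :: .d :: mulC t

theorem exists_mulC_eq_cons (t : List CD) : ∃ s, mulC t = .c :: s := by
  induction t using mulC.induct <;> simp [mulC]

theorem length_le_length_mulC (t : List CD) : t.length ≤ 2 * (mulC t).length + 2 := by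
  induction t using mulC.induct <;> simp [mulC] <;> omega

def act : WN →* Function.End (List CD) :=
  FreeMonoid.lift fun
    | .c => (mulC : Function.End (List CD))
    | .d => (List.cons .d : Function.End (List CD))

theorem act_mul (u v : WN) (t : List CD) : act (u * v) t = act u (act v t) := by
  rw [map_mul]; rfl

theorem act_c (t : List CD) : act c t = mulC t := rfl

theorem act_d (t : List CD) : act d t = .d :: t := rfl

theorem conGen_le_ker_act : conGen rN ≤ Con.ker act := by
  refine Con.conGen_le.mpr ?_
  rintro x _ ⟨hx, rfl⟩
  show act _ = act _
  funext t
  obtain ⟨s, hs⟩ := exists_mulC_eq_cons t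
  rcases hx with rfl | rfl | rfl | rfl <;>
  · simp only [pow_succ, pow_zero, one_mul, act_mul, act_c, act_d]
    simp [mulC, hs]

def nf (x : (conGen rN).Quotient) : List CD := (conGen rN).lift act conGen_le_ker_act x []

def ofNF (l : List CD) : (conGen rN).Quotient := (conGen rN).mk' (FreeMonoid.ofList l)

theorem ofNF_cons_c (l : List CD) : ofNF (.c :: l) = (conGen rN).mk' c * ofNF l := by
  rw [ofNF, FreeMonoid.ofList_cons, map_mul]; rfl

theorem ofNF_cons_d (l : List CD) : ofNF (.d :: l) = (conGen rN).mk' d * ofNF l := by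
  rw [ofNF, FreeMonoid.ofList_cons, map_mul]; rfl

theorem ofNF_mulC (t : List CD) : ofNF (mulC t) = (conGen rN).mk' c * ofNF t := by
  have rel : ∀ {u}, rN u (c * d * c) → (conGen rN).mk' u = (conGen rN).mk' (c * d * c) :=
    fun h => (Con.eq _).mpr (ConGen.Rel.of _ _ h)
  have e2 := rel (u := c * d ^ 2 * c) ⟨Or.inl rfl, rfl⟩
  have e4 := rel (u := c * d ^ 4) ⟨Or.inr (Or.inl rfl), rfl⟩
  have e3c2 := rel (u := c * d ^ 3 * c ^ 2) ⟨Or.inr (Or.inr (Or.inl rfl)), rfl⟩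
  have e3cdc := rel (u := c * d ^ 3 * (c * d * c)) ⟨Or.inr (Or.inr (Or.inr rfl)), rfl⟩
  simp only [pow_succ, pow_zero, one_mul, map_mul, ← mul_assoc] at e2 e4 e3c2 e3cdc
  induction t using mulC.induct <;> simp_all only [mulC, ofNF_cons_c, ofNF_cons_d, ← mul_assoc]

theorem ofNF_act (w : WN) : ofNF (act w []) = (conGen rN).mk' w := by
  induction w using FreeMonoid.inductionOn' with
  | one => rfl
  | of_mul x w ih =>
    rw [act_mul, map_mul]
    cases x with
    | c => rw [← c, act_c, ofNF_mulC, ih]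
    | d => rw [← d, act_d, ofNF_cons_d, ih]

theorem nf_mk (w : WN) : nf ((conGen rN).mk' w) = act w [] := by
  rw [nf, Con.lift_mk']

theorem ofNF_nf (x : (conGen rN).Quotient) : ofNF (nf x) = x := by
  induction x using Con.induction_on with
  | H w => exact (congrArg ofNF (nf_mk w)).trans (ofNF_act w)

theorem nf_injective : Function.Injective nf :=
  Function.LeftInverse.injective ofNF_nf

theorem nf_mk_mul (w : WN) (x : (conGen rN).Quotient) :
    nf ((conGen rN).mk' w * x) = act w (nf x) := by
  rw [nf, map_mul, Con.lift_mk']; rfl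

theorem length_nf_le_of_mem_inNeighbours {x y : (conGen rN).Quotient}
    (hx : x ∈ inNeighbours {(conGen rN).mk' c, (conGen rN).mk' d} y) :
    (nf x).length ≤ 2 * (nf y).length + 2 := by
  obtain ⟨g, rfl | rfl, rfl⟩ := hx
  · rw [nf_mk_mul, act_c]; exact length_le_length_mulC _
  · rw [nf_mk_mul, act_d, List.length_cons]; omega

theorem inNeighbours_finite (y : (conGen rN).Quotient) :
    (inNeighbours {(conGen rN).mk' c, (conGen rN).mk' d} y).Finite :=
  ((List.finite_length_le CD _).preimage nf_injective.injOn).subset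
    fun _ hx => length_nf_le_of_mem_inNeighbours hx

end MonoidN

/-- The unlabelled directed left Cayley graphs of `M` and `N` are not isomorphic. -/
theorem stmt18 :
    ¬ ∃ f : (conGen rM).Quotient ≃ (conGen rN).Quotient,
      ∀ x y : (conGen rM).Quotient,
        (∃ g, (g = (conGen rM).mk' a ∨ g = (conGen rM).mk' b) ∧ y = g * x) ↔
        (∃ h, (h = (conGen rN).mk' c ∨ h = (conGen rN).mk' d) ∧ f y = h * f x) := by
  rintro ⟨f, hf⟩
  have himage := image_inNeighbours (A := {(conGen rM).mk' a, (conGen rM).mk' b})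
    (B := {(conGen rN).mk' c, (conGen rN).mk' d}) f hf ((conGen rM).mk' (a * b * a))
  refine MonoidM.inNeighbours_aba_infinite.image f.injective.injOn ?_
  rw [himage]
  exact MonoidN.inNeighbours_finite _
end
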